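/- arXiv:1701.06119 — 7 statements merged into one kernel-verified Lean document; each statement's English description precedes it below -/
import Mathlib

section
/- For every function f : X × X → ℝ with f(x,y) > 0 for all (x,y) ∈ E, there exist a Markov kernel w ∈ W(X,E), a real number Z > 0, and a function γ : X → (0,∞) such that w(y|x) = (1/Z) · (γ(y)/γ(x)) · f(x,y) for every (x,y) ∈ E. -/
/-!
The weights `f` form a nonnegative matrix `A` (zero off `E`), irreducible because `(X, E)` is
strongly connected. By Perron–Frobenius, `A γ = Z γ` for some `Z > 0` and some `γ` with positive
entries, and then `w(y|x) = A x y γ y / (Z γ x)` has row sums `(A γ) x / (Z γ x) = 1`.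

The Perron eigenvector is found à la Collatz–Wielandt: maximize `ρ` over the compact set of pairs
`(ρ, γ)` with `γ` in the standard simplex and `ρ • γ ≤ A *ᵥ γ`. If a maximizer were not an
eigenpair, a matrix `P` with positive entries commuting with `A` (a sum of powers of `A`) would
make the inequality strict in every coordinate, so `ρ` could be increased.
-/

open scoped BigOperators

/-- The directed graph `(X, E)` is strongly connected: any vertex can be reached
from any other by a path of length at least one along edges in `E`. -/
def StronglyConnected {X : Type*} (E : Finset (X × X)) : Prop :=
  ∀ x y : X, Relation.TransGen (fun a b => (a, b) ∈ E) x y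

/-- `w` is a Markov kernel on `(X, E)` (an element of `W(X,E)`):
`w x y` denotes `w(y|x)`, is nonnegative, sums to one over `y`,
and is positive exactly on the edge set `E`. -/
def IsMarkovKernel {X : Type*} [Fintype X] (E : Finset (X × X)) (w : X → X → ℝ) : Prop :=
  (∀ x y, 0 ≤ w x y) ∧ (∀ x, ∑ y, w x y = 1) ∧ (∀ x y, (0 < w x y ↔ (x, y) ∈ E))

open Filter Topology Matrix

theorem exists_gt_forall_mul_lt {ι : Type*} [Finite ι] {r : ℝ} {a b : ι → ℝ}
    (h : ∀ i, r * a i < b i) : ∃ ρ > r, ∀ i, ρ * a i < b i := by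
  have hev : ∀ᶠ ρ in 𝓝 r, ∀ i, ρ * a i < b i := eventually_all.2 fun i =>
    (continuous_id.mul continuous_const).continuousAt.eventually (gt_mem_nhds (h i))
  obtain ⟨ρ, hρ, hr⟩ := ((hev.filter_mono nhdsWithin_le_nhds).and self_mem_nhdsWithin).exists
    (f := 𝓝[>] r)
  exact ⟨ρ, hr, hρ⟩

theorem inv_sum_smul_mem_stdSimplex {ι : Type*} [Fintype ι] {η : ι → ℝ} (hη : 0 ≤ η)
    (hs : 0 < ∑ i, η i) : (∑ i, η i)⁻¹ • η ∈ stdSimplex ℝ ι :=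
  ⟨fun i => smul_nonneg (inv_nonneg.2 hs.le) (hη i), by simp [← Finset.mul_sum, hs.ne']⟩

namespace Matrix

variable {n : Type*} [Fintype n] {A : Matrix n n ℝ}

theorem mulVec_nonneg (hA : ∀ i j, 0 ≤ A i j) {v : n → ℝ} (hv : 0 ≤ v) : 0 ≤ A *ᵥ v :=
  fun i => Finset.sum_nonneg fun j _ => mul_nonneg (hA i j) (hv j)

theorem mulVec_apply_pos (hA : ∀ i j, 0 ≤ A i j) {v : n → ℝ} (hv : 0 ≤ v) {i j : n}
    (hij : 0 < A i j) (hj : 0 < v j) : 0 < (A *ᵥ v) i :=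
  Finset.sum_pos' (fun k _ => mul_nonneg (hA i k) (hv k))
    ⟨j, Finset.mem_univ j, mul_pos hij hj⟩

theorem mulVec_pos (hA : ∀ i j, 0 < A i j) {v : n → ℝ} (hv : 0 ≤ v) (hv0 : v ≠ 0) (i : n) :
    0 < (A *ᵥ v) i := by
  obtain ⟨j, hj⟩ := Function.ne_iff.1 hv0
  exact mulVec_apply_pos (fun i j => (hA i j).le) hv (hA i j) ((hv j).lt_of_ne' hj)

/-- The pairs `(ρ, γ)` entering the Collatz–Wielandt formula `r(A) = max_γ min_i (A γ)ᵢ / γᵢ`. -/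
def collatzWielandtSet (A : Matrix n n ℝ) : Set (ℝ × (n → ℝ)) :=
  {p | p.2 ∈ stdSimplex ℝ n ∧ 0 ≤ p.1 ∧ p.1 • p.2 ≤ A *ᵥ p.2}

theorem fst_le_sum_of_mem_collatzWielandtSet (hA : ∀ i j, 0 ≤ A i j) {p : ℝ × (n → ℝ)}
    (hp : p ∈ A.collatzWielandtSet) : p.1 ≤ ∑ i, ∑ j, A i j := by
  obtain ⟨hγ, -, hle⟩ := hp
  calc p.1 = ∑ i, (p.1 • p.2) i := by simp [← Finset.mul_sum, hγ.2]
    _ ≤ ∑ i, (A *ᵥ p.2) i := Finset.sum_le_sum fun i _ => hle i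
    _ ≤ ∑ i, ∑ j, A i j := Finset.sum_le_sum fun i _ => Finset.sum_le_sum fun j _ =>
        mul_le_of_le_one_right (hA i j) (mem_Icc_of_mem_stdSimplex hγ j).2

theorem isCompact_collatzWielandtSet (hA : ∀ i j, 0 ≤ A i j) :
    IsCompact A.collatzWielandtSet := by
  have hclosed : IsClosed A.collatzWielandtSet :=
    ((isClosed_stdSimplex ℝ n).preimage continuous_snd).inter
      ((isClosed_le continuous_const continuous_fst).inter
        (isClosed_le (continuous_fst.smul continuous_snd)
          (continuous_const.matrix_mulVec continuous_snd)))
  refine ((isCompact_Icc (a := 0) (b := ∑ i, ∑ j, A i j)).prod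
    (isCompact_stdSimplex ℝ n)).of_isClosed_subset hclosed fun p hp => ?_
  exact ⟨⟨hp.2.1, fst_le_sum_of_mem_collatzWielandtSet hA hp⟩, hp.1⟩

theorem collatzWielandtSet_nonempty [Nonempty n] (hA : ∀ i j, 0 ≤ A i j) :
    A.collatzWielandtSet.Nonempty := by
  classical
  let i : n := Classical.arbitrary n
  refine ⟨(0, Pi.single i 1), single_mem_stdSimplex ℝ i, le_rfl, ?_⟩
  simpa using mulVec_nonneg hA (Pi.single_nonneg.2 zero_le_one)

theorem mk_inv_sum_smul_mem_collatzWielandtSet {ρ : ℝ} {η : n → ℝ} (hρ : 0 ≤ ρ) (hη : 0 ≤ η)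
    (hs : 0 < ∑ i, η i) (hle : ρ • η ≤ A *ᵥ η) :
    (ρ, (∑ i, η i)⁻¹ • η) ∈ A.collatzWielandtSet := by
  refine ⟨inv_sum_smul_mem_stdSimplex hη hs, hρ, ?_⟩
  rw [mulVec_smul, smul_comm]
  exact smul_le_smul_of_nonneg_left hle (inv_nonneg.2 hs.le)

variable {P : Matrix n n ℝ}

theorem exists_gt_mem_collatzWielandtSet (hP : ∀ i j, 0 < P i j) (hAP : Commute A P)
    {p : ℝ × (n → ℝ)} (hp : p ∈ A.collatzWielandtSet) (hne : p.1 • p.2 ≠ A *ᵥ p.2) :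
    ∃ q ∈ A.collatzWielandtSet, p.1 < q.1 := by
  obtain ⟨r, γ⟩ := p
  obtain ⟨hγ, hr, hle⟩ := hp
  have hγ0 : γ ≠ 0 := fun h => by simpa [h] using hγ.2
  set η := P *ᵥ γ
  have hη : ∀ i, 0 < η i := mulVec_pos hP hγ.1 hγ0
  have hstrict : ∀ i, r * η i < (A *ᵥ η) i := by
    have hPδ : P *ᵥ (A *ᵥ γ - r • γ) = A *ᵥ η - r • η := by
      rw [mulVec_sub, mulVec_smul, mulVec_mulVec, ← hAP.eq, ← mulVec_mulVec]
    intro i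
    simpa [hPδ] using mulVec_pos hP (sub_nonneg.2 hle) (sub_ne_zero.2 hne.symm) i
  obtain ⟨ρ, hρr, hρ⟩ := exists_gt_forall_mul_lt hstrict
  have hs : 0 < ∑ i, η i :=
    have ⟨j, _⟩ := Function.ne_iff.1 hγ0
    Finset.sum_pos' (fun i _ => (hη i).le) ⟨j, Finset.mem_univ j, hη j⟩
  exact ⟨_, mk_inv_sum_smul_mem_collatzWielandtSet (hr.trans hρr.le) (fun i => (hη i).le) hs
    fun i => (hρ i).le, hρr⟩

theorem exists_pos_mulVec_eq_smul_of_pos_commute [Nonempty n] (hA : ∀ i j, 0 ≤ A i j)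
    (hP : ∀ i j, 0 < P i j) (hAP : Commute A P) :
    ∃ r : ℝ, ∃ γ : n → ℝ, (∀ i, 0 < γ i) ∧ A *ᵥ γ = r • γ := by
  obtain ⟨⟨r, γ⟩, hmem, hmax⟩ := (isCompact_collatzWielandtSet hA).exists_isMaxOn
    (collatzWielandtSet_nonempty hA) continuous_fst.continuousOn
  have heig : A *ᵥ γ = r • γ := by
    by_contra hne
    obtain ⟨q, hq, hlt⟩ := exists_gt_mem_collatzWielandtSet hP hAP hmem (Ne.symm hne)
    exact (hmax hq).not_gt hlt
  -- `γ` itself may have zero entries; `P *ᵥ γ` is a positive eigenvector for the same `r`.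
  refine ⟨r, P *ᵥ γ, mulVec_pos hP hmem.1.1 fun h => by simpa [h] using hmem.1.2, ?_⟩
  rw [mulVec_mulVec, hAP.eq, ← mulVec_mulVec, heig, mulVec_smul]

variable [DecidableEq n]

theorem exists_pow_pos_of_transGen (hA : ∀ i j, 0 ≤ A i j) {i j : n}
    (h : Relation.TransGen (fun a b => 0 < A a b) i j) : ∃ k > 0, 0 < (A ^ k) i j := by
  induction h with
  | single hij => exact ⟨1, one_pos, by simpa using hij⟩
  | @tail b c _ hbc ih =>
    obtain ⟨k, -, hk⟩ := ih
    refine ⟨k + 1, k.succ_pos, ?_⟩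
    rw [pow_succ, mul_apply]
    exact Finset.sum_pos' (fun l _ => mul_nonneg (pow_apply_nonneg hA _ _ _) (hA _ _))
      ⟨b, Finset.mem_univ b, mul_pos hk hbc⟩

theorem IsIrreducible.exists_pos_commute (hA : A.IsIrreducible) :
    ∃ P : Matrix n n ℝ, (∀ i j, 0 < P i j) ∧ Commute A P := by
  choose k _ hk using (isIrreducible_iff_exists_pow_pos hA.nonneg).1 hA
  refine ⟨∑ p : n × n, A ^ k p.1 p.2, fun i j => ?_,
    Commute.sum_right _ _ _ fun p _ => Commute.self_pow A _⟩
  rw [Matrix.sum_apply]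
  exact Finset.sum_pos' (fun p _ => pow_apply_nonneg hA.nonneg _ _ _)
    ⟨(i, j), Finset.mem_univ _, hk i j⟩

theorem IsIrreducible.exists_pos_eigenvector [Nontrivial n] (hA : A.IsIrreducible) :
    ∃ r > (0 : ℝ), ∃ γ : n → ℝ, (∀ i, 0 < γ i) ∧ A *ᵥ γ = r • γ := by
  obtain ⟨P, hP, hAP⟩ := hA.exists_pos_commute
  obtain ⟨r, γ, hγ, heig⟩ := exists_pos_mulVec_eq_smul_of_pos_commute hA.nonneg hP hAP
  refine ⟨r, ?_, γ, hγ, heig⟩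
  let i : n := Classical.arbitrary n
  obtain ⟨j, hij⟩ := hA.exists_pos i
  have hAγ := mulVec_apply_pos hA.nonneg (fun k => (hγ k).le) hij (hγ j)
  rw [heig, Pi.smul_apply, smul_eq_mul] at hAγ
  exact pos_of_mul_pos_left hAγ (hγ i).le

end Matrix

section

variable {X : Type*}

theorem isMarkovKernel_of_mulVec_eq_smul [Fintype X] {E : Finset (X × X)} {A : Matrix X X ℝ}
    (hA : ∀ x y, 0 ≤ A x y) (hAE : ∀ x y, 0 < A x y ↔ (x, y) ∈ E) {r : ℝ} (hr : 0 < r)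
    {γ : X → ℝ} (hγ : ∀ x, 0 < γ x) (heig : A *ᵥ γ = r • γ) :
    IsMarkovKernel E fun x y => 1 / r * (γ y / γ x) * A x y := by
  have hc : ∀ x y, 0 < 1 / r * (γ y / γ x) := fun x y =>
    mul_pos (one_div_pos.2 hr) (div_pos (hγ y) (hγ x))
  refine ⟨fun x y => mul_nonneg (hc x y).le (hA x y), fun x => ?_, fun x y => ?_⟩
  · have hx : ∑ y, A x y * γ y = r * γ x := congrFun heig x
    have hγx := (hγ x).ne'
    calc ∑ y, 1 / r * (γ y / γ x) * A x y = (∑ y, A x y * γ y) / (r * γ x) := by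
          rw [Finset.sum_div]
          exact Finset.sum_congr rfl fun y _ => by field_simp
      _ = 1 := by rw [hx, div_self (mul_pos hr (hγ x)).ne']
  · rw [mul_pos_iff_of_pos_left (hc x y), hAE]

variable [DecidableEq X]

def edgeMatrix (E : Finset (X × X)) (f : X → X → ℝ) : Matrix X X ℝ :=
  Matrix.of fun x y => if (x, y) ∈ E then f x y else 0

variable {E : Finset (X × X)} {f : X → X → ℝ}

theorem edgeMatrix_nonneg (hf : ∀ x y, (x, y) ∈ E → 0 < f x y) (x y : X) :
    0 ≤ edgeMatrix E f x y := by
  rw [edgeMatrix, of_apply]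
  split_ifs with h
  exacts [(hf x y h).le, le_rfl]

theorem edgeMatrix_pos_iff (hf : ∀ x y, (x, y) ∈ E → 0 < f x y) (x y : X) :
    0 < edgeMatrix E f x y ↔ (x, y) ∈ E := by
  rw [edgeMatrix, of_apply]
  split_ifs with h <;> simp [h, hf x y]

theorem isIrreducible_edgeMatrix [Fintype X] (hconn : StronglyConnected E)
    (hf : ∀ x y, (x, y) ∈ E → 0 < f x y) : (edgeMatrix E f).IsIrreducible := by
  refine (isIrreducible_iff_exists_pow_pos (edgeMatrix_nonneg hf)).2 fun x y => ?_
  refine exists_pow_pos_of_transGen (edgeMatrix_nonneg hf) ?_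
  exact Relation.TransGen.mono (fun a b hab => (edgeMatrix_pos_iff hf a b).2 hab) _ _ (hconn x y)

end

/-- Perron–Frobenius type existence. For every function
`f` positive on `E` there exist a Markov kernel `w ∈ W(X,E)`, a constant `Z > 0` and
a positive function `γ` with `w(y|x) = (1/Z) (γ(y)/γ(x)) f(x,y)` on `E`. -/
theorem markov_normalization_exists
    {X : Type*} [Fintype X] [DecidableEq X] (hX : 2 ≤ Fintype.card X)
    (E : Finset (X × X)) (hconn : StronglyConnected E)
    (f : X → X → ℝ) (hf : ∀ x y, (x, y) ∈ E → 0 < f x y) :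
    ∃ (w : X → X → ℝ) (Z : ℝ) (γ : X → ℝ),
      IsMarkovKernel E w ∧ 0 < Z ∧ (∀ x, 0 < γ x) ∧
      ∀ x y, (x, y) ∈ E → w x y = (1 / Z) * (γ y / γ x) * f x y := by
  have : Nontrivial X := Fintype.one_lt_card_iff_nontrivial.1 hX
  obtain ⟨Z, hZ, γ, hγ, heig⟩ := (isIrreducible_edgeMatrix hconn hf).exists_pos_eigenvector
  refine ⟨fun x y => 1 / Z * (γ y / γ x) * edgeMatrix E f x y, Z, γ,
    isMarkovKernel_of_mulVec_eq_smul (edgeMatrix_nonneg hf) (edgeMatrix_pos_iff hf) hZ hγ heig,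
    hZ, hγ, fun x y hxy => ?_⟩
  simp [edgeMatrix, hxy]
end

section
/- Let f : X × X → ℝ satisfy f(x,y) > 0 for all (x,y) ∈ E. If (w, Z, γ) and (w', Z', γ') both consist of a Markov kernel in W(X,E), a positive real number, and a positive function on X such that w(y|x) = (1/Z)(γ(y)/γ(x)) f(x,y) and w'(y|x) = (1/Z')(γ'(y)/γ'(x)) f(x,y) for all (x,y) ∈ E, then w = w', Z = Z', and there exists a constant c > 0 with γ'(x) = c · γ(x) for all x ∈ X. -/
/-!
Put `r = γ' / γ`. Comparing the two normalizations edge by edge shows that `w'` is the Doob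
transform of `w` by `r`, so `r` is a positive eigenvector of `w` with eigenvalue `Z' / Z`.
Evaluating the eigenvalue equation at a maximum and at a minimum of `r` forces `Z' / Z = 1`;
then `r` is `w`-harmonic, and by the strong maximum principle along the edges of the strongly
connected graph it is constant. A constant `r` makes the Doob transform trivial, so `w' = w`.
-/

open scoped BigOperators

open Finset

section StochasticRow

variable {X : Type*} [Fintype X] {p g : X → ℝ} {M : ℝ}

theorem sum_mul_le_of_forall_le (hp0 : ∀ y, 0 ≤ p y) (hp1 : ∑ y, p y = 1)
    (hg : ∀ y, g y ≤ M) : ∑ y, p y * g y ≤ M :=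
  calc ∑ y, p y * g y ≤ ∑ y, p y * M :=
        sum_le_sum fun y _ => mul_le_mul_of_nonneg_left (hg y) (hp0 y)
    _ = M := by rw [← sum_mul, hp1, one_mul]

theorem le_sum_mul_of_forall_le (hp0 : ∀ y, 0 ≤ p y) (hp1 : ∑ y, p y = 1)
    (hg : ∀ y, M ≤ g y) : M ≤ ∑ y, p y * g y :=
  calc M = ∑ y, p y * M := by rw [← sum_mul, hp1, one_mul]
    _ ≤ ∑ y, p y * g y := sum_le_sum fun y _ => mul_le_mul_of_nonneg_left (hg y) (hp0 y)

theorem eq_of_sum_mul_eq_of_forall_le (hp0 : ∀ y, 0 ≤ p y) (hp1 : ∑ y, p y = 1)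
    (hg : ∀ y, g y ≤ M) (hsum : ∑ y, p y * g y = M) {b : X} (hb : 0 < p b) : g b = M := by
  have hdefect : ∑ y, p y * (M - g y) = 0 := by
    simp only [mul_sub, sum_sub_distrib, ← sum_mul, hp1, one_mul, hsum, sub_self]
  have hnonneg : ∀ y ∈ univ, 0 ≤ p y * (M - g y) :=
    fun y _ => mul_nonneg (hp0 y) (sub_nonneg.2 (hg y))
  have hb0 := (sum_eq_zero_iff_of_nonneg hnonneg).1 hdefect b (mem_univ b)
  have := (mul_eq_zero.1 hb0).resolve_left hb.ne'
  linarith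

end StochasticRow

section StochasticMatrix

variable {X : Type*} [Fintype X] {w w' : X → X → ℝ} {r : X → ℝ} {μ : ℝ}

theorem IsMarkovKernel.eq_zero_of_notMem {E : Finset (X × X)} (hw : IsMarkovKernel E w)
    {x y : X} (h : (x, y) ∉ E) : w x y = 0 :=
  le_antisymm (not_lt.1 fun hp => h ((hw.2.2 x y).1 hp)) (hw.1 x y)

/-- The hypothesis `h` says that `w'` is the Doob transform of `w` by `r` and `μ`. -/
theorem sum_mul_eq_of_eq_doobTransform (hw'1 : ∀ x, ∑ y, w' x y = 1) (hr : ∀ x, r x ≠ 0)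
    (hμ : μ ≠ 0) (h : ∀ x y, w' x y = μ⁻¹ * (r y / r x) * w x y) (x : X) :
    ∑ y, w x y * r y = μ * r x :=
  calc ∑ y, w x y * r y = μ * r x * ∑ y, w' x y := by
        rw [mul_sum]
        refine sum_congr rfl fun y _ => ?_
        rw [h]
        field_simp [hr x]
    _ = μ * r x := by rw [hw'1, mul_one]

theorem eigenvalue_eq_one_of_pos [Nonempty X] (hw0 : ∀ x y, 0 ≤ w x y)
    (hw1 : ∀ x, ∑ y, w x y = 1) (hr : ∀ x, 0 < r x)
    (heig : ∀ x, ∑ y, w x y * r y = μ * r x) :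
    μ = 1 := by
  obtain ⟨xmax, -, hmax⟩ := exists_max_image univ r univ_nonempty
  obtain ⟨xmin, -, hmin⟩ := exists_min_image univ r univ_nonempty
  have hle : μ * r xmax ≤ r xmax :=
    heig xmax ▸ sum_mul_le_of_forall_le (hw0 xmax) (hw1 xmax) fun y => hmax y (mem_univ y)
  have hge : r xmin ≤ μ * r xmin :=
    heig xmin ▸ le_sum_mul_of_forall_le (hw0 xmin) (hw1 xmin) fun y => hmin y (mem_univ y)
  have := hr xmax
  have := hr xmin
  apply le_antisymm <;> nlinarith

/-- Strong maximum principle. -/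
theorem eq_of_harmonic {E : Finset (X × X)} (hw0 : ∀ x y, 0 ≤ w x y)
    (hw1 : ∀ x, ∑ y, w x y = 1) (hwE : ∀ x y, (x, y) ∈ E → 0 < w x y)
    (hconn : StronglyConnected E) (hharm : ∀ x, ∑ y, w x y * r y = r x) (x y : X) :
    r x = r y := by
  obtain ⟨xmax, -, hmax⟩ := exists_max_image univ r ⟨x, mem_univ x⟩
  have hle : ∀ y, r y ≤ r xmax := fun y => hmax y (mem_univ y)
  have hstep : ∀ a b, r a = r xmax → (a, b) ∈ E → r b = r xmax := fun a b ha hab =>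
    eq_of_sum_mul_eq_of_forall_le (hw0 a) (hw1 a) hle ((hharm a).trans ha) (hwE a b hab)
  have hconst : ∀ z, r z = r xmax := fun z => by
    induction hconn xmax z with
    | single hab => exact hstep _ _ rfl hab
    | tail _ hbc ih => exact hstep _ _ ih hbc
  rw [hconst x, hconst y]

end StochasticMatrix

theorem IsMarkovKernel.eq_doobTransform_of_normalization {X : Type*} [Fintype X]
    {E : Finset (X × X)} {f w w' : X → X → ℝ} {Z Z' : ℝ} {γ γ' : X → ℝ}
    (hw : IsMarkovKernel E w) (hw' : IsMarkovKernel E w') (hZ : Z ≠ 0)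
    (hγ : ∀ x, 0 < γ x) (hγ' : ∀ x, 0 < γ' x)
    (heq : ∀ x y, (x, y) ∈ E → w x y = (1 / Z) * (γ y / γ x) * f x y)
    (heq' : ∀ x y, (x, y) ∈ E → w' x y = (1 / Z') * (γ' y / γ' x) * f x y) (x y : X) :
    w' x y = (Z' / Z)⁻¹ * ((γ' y / γ y) / (γ' x / γ x)) * w x y := by
  by_cases hE : (x, y) ∈ E
  · rw [heq' x y hE, heq x y hE]
    field_simp [hZ, (hγ x).ne', (hγ y).ne', (hγ' x).ne']
  · rw [hw.eq_zero_of_notMem hE, hw'.eq_zero_of_notMem hE, mul_zero]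

theorem markov_normalization_unique_general
    {X : Type*} [Fintype X] (hX : 2 ≤ Fintype.card X)
    (E : Finset (X × X)) (hconn : StronglyConnected E)
    (f : X → X → ℝ)
    (w w' : X → X → ℝ) (Z Z' : ℝ) (γ γ' : X → ℝ)
    (hw : IsMarkovKernel E w) (hZ : 0 < Z) (hγ : ∀ x, 0 < γ x)
    (heq : ∀ x y, (x, y) ∈ E → w x y = (1 / Z) * (γ y / γ x) * f x y)
    (hw' : IsMarkovKernel E w') (hZ' : 0 < Z') (hγ' : ∀ x, 0 < γ' x)
    (heq' : ∀ x y, (x, y) ∈ E → w' x y = (1 / Z') * (γ' y / γ' x) * f x y) :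
    w = w' ∧ Z = Z' ∧ ∃ c : ℝ, 0 < c ∧ ∀ x, γ' x = c * γ x := by
  have : Nonempty X := Fintype.card_pos_iff.mp (by omega)
  set r : X → ℝ := fun x => γ' x / γ x
  have hr : ∀ x, 0 < r x := fun x => div_pos (hγ' x) (hγ x)
  have hdoob : ∀ x y, w' x y = (Z' / Z)⁻¹ * (r y / r x) * w x y :=
    hw.eq_doobTransform_of_normalization hw' hZ.ne' hγ hγ' heq heq'
  have heig := sum_mul_eq_of_eq_doobTransform hw'.2.1 (fun x => (hr x).ne')
    (div_pos hZ' hZ).ne' hdoob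
  have hμ : Z' / Z = 1 := eigenvalue_eq_one_of_pos hw.1 hw.2.1 hr heig
  have hconst : ∀ x y, r x = r y :=
    eq_of_harmonic hw.1 hw.2.1 (fun x y => (hw.2.2 x y).2) hconn
      fun x => by rw [heig, hμ, one_mul]
  obtain ⟨x₀⟩ := ‹Nonempty X›
  refine ⟨?_, ((div_eq_one_iff_eq hZ.ne').1 hμ).symm, r x₀, hr x₀, fun x => ?_⟩
  · funext x y
    rw [hdoob, hμ, hconst y x, div_self (hr x).ne', inv_one, one_mul, one_mul]
  · rw [hconst x₀ x]
    exact (div_mul_cancel₀ _ (hγ x).ne').symm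

/-- Perron–Frobenius type uniqueness. If `(w, Z, γ)` and
`(w', Z', γ')` both normalize the same positive function `f` on `E`, then
`w = w'`, `Z = Z'` and `γ' = c • γ` for some constant `c > 0`. -/
theorem markov_normalization_unique
    {X : Type*} [Fintype X] [DecidableEq X] (hX : 2 ≤ Fintype.card X)
    (E : Finset (X × X)) (hconn : StronglyConnected E)
    (f : X → X → ℝ) (hf : ∀ x y, (x, y) ∈ E → 0 < f x y)
    (w w' : X → X → ℝ) (Z Z' : ℝ) (γ γ' : X → ℝ)
    (hw : IsMarkovKernel E w) (hZ : 0 < Z) (hγ : ∀ x, 0 < γ x)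
    (heq : ∀ x y, (x, y) ∈ E → w x y = (1 / Z) * (γ y / γ x) * f x y)
    (hw' : IsMarkovKernel E w') (hZ' : 0 < Z') (hγ' : ∀ x, 0 < γ' x)
    (heq' : ∀ x y, (x, y) ∈ E → w' x y = (1 / Z') * (γ' y / γ' x) * f x y) :
    w = w' ∧ Z = Z' ∧ ∃ c : ℝ, 0 < c ∧ ∀ x, γ' x = c * γ x :=
  markov_normalization_unique_general hX E hconn f w w' Z Z' γ γ' hw hZ hγ heq hw' hZ' hγ' heq'
end

section
/- Let w_0, w_1 ∈ W(X,E). For each t ∈ ℝ let w_t ∈ W(X,E) be the unique Markov kernel for which there exist Z_t > 0 and γ_t : X → (0,∞) with w_t(y|x) = (1/Z_t)(γ_t(y)/γ_t(x)) · w_1(y|x)^t · w_0(y|x)^{1−t} for all (x,y) ∈ E. Then {w_t : t ∈ ℝ} is a 1-dimensional exponential family of Markov kernels on (X,E) containing w_0 (at t = 0) and w_1 (at t = 1). -/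
open scoped BigOperators

/-- `M ⊆ W(X,E)` is a `d`-dimensional exponential family of Markov kernels:
there exist `C, F₁, …, F_d : X × X → ℝ`, `K : ℝ^d × X → ℝ` and `ψ : ℝ^d → ℝ`
such that, with `w_θ` defined by
`log w_θ(y|x) = C(x,y) + Σᵢ θⁱ Fᵢ(x,y) + K_θ(y) − K_θ(x) − ψ(θ)` on `E`
and `w_θ(y|x) = 0` off `E`, each `w_θ` lies in `W(X,E)` and `M = {w_θ : θ ∈ ℝ^d}`. -/
def IsExpFamily {X : Type*} [Fintype X] (E : Finset (X × X)) (d : ℕ)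
    (M : Set (X → X → ℝ)) : Prop :=
  ∃ (C : X → X → ℝ) (F : Fin d → X → X → ℝ) (K : (Fin d → ℝ) → X → ℝ)
    (ψ : (Fin d → ℝ) → ℝ) (w : (Fin d → ℝ) → X → X → ℝ),
    (∀ θ x y, (x, y) ∈ E →
      Real.log (w θ x y) = C x y + ∑ i, θ i * F i x y + K θ y - K θ x - ψ θ) ∧
    (∀ θ x y, (x, y) ∉ E → w θ x y = 0) ∧
    (∀ θ, IsMarkovKernel E (w θ)) ∧
    M = Set.range w

/- A kernel `w'` that agrees on `E` with the gauge transform `(1/Z)(γ y/γ x) w(y|x)` of a Markov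
kernel `w` forces `γ` to be a positive eigenvector of `w` with eigenvalue `Z`. Comparing the
eigenvalue equation at a maximum and a minimum of `γ` gives `Z = 1`; then `γ` is `w`-harmonic, and by
the maximum principle and strong connectivity it is constant, so `w' = w`. Hence `t ↦ w_t` passes
through `w₀` and `w₁`. The exponential-family structure is read off by taking logarithms:
`log w_t = log w₀ + t (log w₁ - log w₀) + log γ_t(y) - log γ_t(x) - log Z_t`. -/

namespace IsMarkovKernel

variable {X : Type*} [Fintype X] {E : Finset (X × X)} {w : X → X → ℝ}

lemma eq_zero_of_notMem_s8 (hw : IsMarkovKernel E w) {x y : X} (h : (x, y) ∉ E) : w x y = 0 :=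
  le_antisymm (not_lt.mp fun hpos => h ((hw.2.2 x y).mp hpos)) (hw.1 x y)

lemma sum_mul_const (hw : IsMarkovKernel E w) (x : X) (c : ℝ) : ∑ y, w x y * c = c := by
  rw [← Finset.sum_mul, hw.2.1 x, one_mul]

lemma eigenvalue_eq_one_of_pos [Nonempty X] (hw : IsMarkovKernel E w) {Z : ℝ} {γ : X → ℝ}
    (hγ : ∀ x, 0 < γ x) (heig : ∀ x, ∑ y, w x y * γ y = Z * γ x) : Z = 1 := by
  obtain ⟨xmin, hmin⟩ := Finite.exists_min γ
  obtain ⟨xmax, hmax⟩ := Finite.exists_max γ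
  have hge : γ xmin ≤ Z * γ xmin := by
    calc γ xmin = ∑ y, w xmin y * γ xmin := (hw.sum_mul_const xmin _).symm
      _ ≤ ∑ y, w xmin y * γ y :=
          Finset.sum_le_sum fun y _ => mul_le_mul_of_nonneg_left (hmin y) (hw.1 xmin y)
      _ = Z * γ xmin := heig xmin
  have hle : Z * γ xmax ≤ γ xmax := by
    calc Z * γ xmax = ∑ y, w xmax y * γ y := (heig xmax).symm
      _ ≤ ∑ y, w xmax y * γ xmax :=
          Finset.sum_le_sum fun y _ => mul_le_mul_of_nonneg_left (hmax y) (hw.1 xmax y)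
      _ = γ xmax := hw.sum_mul_const xmax _
  have h1 : 1 ≤ Z := by nlinarith [hγ xmin]
  have h2 : Z ≤ 1 := by nlinarith [hγ xmax]
  exact le_antisymm h2 h1

lemma eq_of_harmonic (hw : IsMarkovKernel E w) (hconn : StronglyConnected E) {f : X → ℝ}
    (hf : ∀ x, ∑ y, w x y * f y = f x) (x y : X) : f x = f y := by
  have : Nonempty X := ⟨x⟩
  obtain ⟨xmax, hmax⟩ := Finite.exists_max f
  have hstep : ∀ a b, (a, b) ∈ E → f a = f xmax → f b = f xmax := by
    intro a b hab ha
    have hsum : ∑ z, w a z * (f xmax - f z) = 0 := by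
      simp only [mul_sub, Finset.sum_sub_distrib, hw.sum_mul_const, hf, ha, sub_self]
    have hterm := (Finset.sum_eq_zero_iff_of_nonneg fun z _ =>
      mul_nonneg (hw.1 a z) (sub_nonneg.mpr (hmax z))).mp hsum b (Finset.mem_univ b)
    have hwab : w a b ≠ 0 := ((hw.2.2 a b).mpr hab).ne'
    linarith [(mul_eq_zero.mp hterm).resolve_left hwab]
  have hconst : ∀ z, f z = f xmax := fun z => by
    induction hconn xmax z with
    | single h => exact hstep _ _ h rfl
    | tail _ h ih => exact hstep _ _ h ih
  rw [hconst x, hconst y]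

lemma eq_of_eq_gauge_transform (hw : IsMarkovKernel E w) (hconn : StronglyConnected E)
    {w' : X → X → ℝ} (hw' : IsMarkovKernel E w') {Z : ℝ} {γ : X → ℝ} (hZ : 0 < Z)
    (hγ : ∀ x, 0 < γ x) (heq : ∀ x y, (x, y) ∈ E → w' x y = (1 / Z) * (γ y / γ x) * w x y) :
    w' = w := by
  have heq' : ∀ x y, w' x y = (1 / Z) * (γ y / γ x) * w x y := by
    intro x y
    by_cases h : (x, y) ∈ E
    · exact heq x y h
    · rw [hw'.eq_zero_of_notMem_s8 h, hw.eq_zero_of_notMem_s8 h, mul_zero]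
  have heig : ∀ x, ∑ y, w x y * γ y = Z * γ x := by
    intro x
    calc ∑ y, w x y * γ y = Z * γ x * ∑ y, w' x y := by
          rw [Finset.mul_sum]
          refine Finset.sum_congr rfl fun y _ => ?_
          rw [heq' x y]
          field_simp [hZ.ne', (hγ x).ne']
      _ = Z * γ x := by rw [hw'.2.1 x, mul_one]
  funext x y
  have : Nonempty X := ⟨x⟩
  obtain rfl : Z = 1 := hw.eigenvalue_eq_one_of_pos hγ heig
  have hγconst : γ y = γ x := hw.eq_of_harmonic hconn (by simpa using heig) y x
  rw [heq' x y, hγconst, div_self (hγ x).ne']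
  norm_num

end IsMarkovKernel

lemma isExpFamily_one_of_log_eq {X : Type*} [Fintype X] {E : Finset (X × X)}
    {wt : ℝ → X → X → ℝ} (hwt : ∀ t, IsMarkovKernel E (wt t)) (C F : X → X → ℝ)
    (K : ℝ → X → ℝ) (ψ : ℝ → ℝ)
    (hlog : ∀ t x y, (x, y) ∈ E →
      Real.log (wt t x y) = C x y + t * F x y + K t y - K t x - ψ t) :
    IsExpFamily E 1 (Set.range wt) := by
  refine ⟨C, fun _ => F, fun θ => K (θ 0), fun θ => ψ (θ 0), fun θ => wt (θ 0),
    fun θ x y h => by simpa using hlog (θ 0) x y h,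
    fun θ x y h => (hwt _).eq_zero_of_notMem_s8 h, fun θ => hwt _, ?_⟩
  exact ((Equiv.funUnique (Fin 1) ℝ).surjective.range_comp wt).symm

lemma log_gauge_geodesic_weight {Z a b u v : ℝ} (hZ : 0 < Z) (hu : 0 < u) (hv : 0 < v)
    (ha : 0 < a) (hb : 0 < b) (t : ℝ) :
    Real.log ((1 / Z) * (v / u) * b ^ t * a ^ (1 - t)) =
      Real.log a + t * (Real.log b - Real.log a) + Real.log v - Real.log u - Real.log Z := by
  have hZu : (1 / Z) * (v / u) ≠ 0 := by positivity
  rw [Real.log_mul (by positivity) (by positivity), Real.log_mul hZu (by positivity),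
    Real.log_mul (by positivity) (by positivity), Real.log_div hv.ne' hu.ne', one_div,
    Real.log_inv, Real.log_rpow hb, Real.log_rpow ha]
  ring

theorem eGeodesic_is_one_dim_exponential_family_general
    {X : Type*} [Fintype X]
    (E : Finset (X × X)) (hconn : StronglyConnected E)
    (w₀ w₁ : X → X → ℝ) (hw₀ : IsMarkovKernel E w₀) (hw₁ : IsMarkovKernel E w₁)
    (wt : ℝ → X → X → ℝ)
    (hwt : ∀ t : ℝ, IsMarkovKernel E (wt t) ∧
      ∃ (Z : ℝ) (γ : X → ℝ), 0 < Z ∧ (∀ x, 0 < γ x) ∧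
        ∀ x y, (x, y) ∈ E →
          wt t x y = (1 / Z) * (γ y / γ x) * (w₁ x y) ^ t * (w₀ x y) ^ (1 - t)) :
    IsExpFamily E 1 (Set.range wt) ∧ wt 0 = w₀ ∧ wt 1 = w₁ := by
  choose hmk Z γ hZ hγ heq using hwt
  refine ⟨?_, ?_, ?_⟩
  · refine isExpFamily_one_of_log_eq hmk (fun x y => Real.log (w₀ x y))
      (fun x y => Real.log (w₁ x y) - Real.log (w₀ x y)) (fun t x => Real.log (γ t x))
      (fun t => Real.log (Z t)) fun t x y hxy => ?_
    rw [heq t x y hxy, log_gauge_geodesic_weight (hZ t) (hγ t x) (hγ t y)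
      ((hw₀.2.2 x y).mpr hxy) ((hw₁.2.2 x y).mpr hxy)]
  · refine hw₀.eq_of_eq_gauge_transform hconn (hmk 0) (hZ 0) (hγ 0) fun x y hxy => ?_
    rw [heq 0 x y hxy, Real.rpow_zero, mul_one, sub_zero, Real.rpow_one]
  · refine hw₁.eq_of_eq_gauge_transform hconn (hmk 1) (hZ 1) (hγ 1) fun x y hxy => ?_
    rw [heq 1 x y hxy, Real.rpow_one, sub_self, Real.rpow_zero, mul_one]

/-- Corollary 2, e-geodesics. Let `w₀, w₁ ∈ W(X,E)` and for each
`t ∈ ℝ` let `w_t ∈ W(X,E)` be the Markov kernel for which there exist `Z_t > 0` and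
`γ_t : X → (0,∞)` with
`w_t(y|x) = (1/Z_t)(γ_t(y)/γ_t(x)) w₁(y|x)^t w₀(y|x)^{1−t}` on `E`.
Then `{w_t : t ∈ ℝ}` is a 1-dimensional exponential family containing `w₀` (at
`t = 0`) and `w₁` (at `t = 1`). -/
theorem eGeodesic_is_one_dim_exponential_family
    {X : Type*} [Fintype X] [DecidableEq X] (hX : 2 ≤ Fintype.card X)
    (E : Finset (X × X)) (hconn : StronglyConnected E)
    (w₀ w₁ : X → X → ℝ) (hw₀ : IsMarkovKernel E w₀) (hw₁ : IsMarkovKernel E w₁)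
    (wt : ℝ → X → X → ℝ)
    (hwt : ∀ t : ℝ, IsMarkovKernel E (wt t) ∧
      ∃ (Z : ℝ) (γ : X → ℝ), 0 < Z ∧ (∀ x, 0 < γ x) ∧
        ∀ x y, (x, y) ∈ E →
          wt t x y = (1 / Z) * (γ y / γ x) * (w₁ x y) ^ t * (w₀ x y) ^ (1 - t)) :
    IsExpFamily E 1 (Set.range wt) ∧ wt 0 = w₀ ∧ wt 1 = w₁ :=
  eGeodesic_is_one_dim_exponential_family_general E hconn w₀ w₁ hw₀ hw₁ wt hwt
end

section
/- Let {w_θ : θ ∈ ℝ^d} ⊆ W(X,E) be an exponential family given by C, F_1, …, F_d, K, ψ, and assume K_θ(x) and ψ(θ) are twice continuously differentiable in θ. Let p_θ denote the stationary distribution of w_θ and assume θ ↦ p_θ is continuously differentiable. Then for all i, j and all θ ∈ ℝ^d, the Fisher information g_ij(θ) := Σ_{(x,y)∈E} p_θ(x) w_θ(y|x) (∂_i log w_θ(y|x))(∂_j log w_θ(y|x)) equals ∂_i ∂_j ψ(θ), where ∂_i = ∂/∂θ^i. -/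
open scoped BigOperators

/-- `p` is the (positive) stationary distribution of the Markov kernel `w`. -/
def IsStationaryDistribution {X : Type*} [Fintype X] (w : X → X → ℝ) (p : X → ℝ) : Prop :=
  (∀ x, 0 < p x) ∧ (∑ x, p x = 1) ∧ (∀ y, ∑ x, p x * w x y = p y)

/-- The partial derivative `∂f/∂θⁱ` of a function `f : ℝ^d → ℝ` at `θ`. -/
noncomputable def pd {d : ℕ} (f : (Fin d → ℝ) → ℝ) (i : Fin d) (θ : Fin d → ℝ) : ℝ :=
  fderiv ℝ f θ (Pi.single i 1)

/-!
Write `Φ_{xy}(θ) = C(x,y) + ⟨θ, F(x,y)⟩ + K_θ(y) − K_θ(x) − ψ(θ)`, so that `w_θ(y|x)` is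
`exp Φ_{xy}(θ)` on `E` and `0` off `E`. Differentiating `Σ_y w_θ(y|x) = 1` twice in `θ` gives,
for every state `x`, Bartlett's identity
`Σ_y w_θ(y|x) ∂_iΦ_{xy} ∂_jΦ_{xy} = −Σ_y w_θ(y|x) ∂_i∂_jΦ_{xy} = ∂_i∂_jψ + κ(x) − Σ_y w_θ(y|x) κ(y)`
with `κ = ∂_i∂_j K_θ`. Averaging over the stationary distribution makes the `κ` terms cancel.
-/

open Real Finset

section PartialDerivative

variable {d : ℕ} {f g : (Fin d → ℝ) → ℝ} {i : Fin d} {θ : Fin d → ℝ}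

lemma pd_const (c : ℝ) (i : Fin d) (θ : Fin d → ℝ) : pd (fun _ => c) i θ = 0 := by
  simp [pd]

lemma pd_const_add (c : ℝ) : pd (fun t => c + f t) i θ = pd f i θ := by
  simp [pd, fderiv_const_add]

lemma pd_add (hf : DifferentiableAt ℝ f θ) (hg : DifferentiableAt ℝ g θ) :
    pd (fun t => f t + g t) i θ = pd f i θ + pd g i θ := by
  simp [pd, fderiv_fun_add hf hg]

lemma pd_sub (hf : DifferentiableAt ℝ f θ) (hg : DifferentiableAt ℝ g θ) :
    pd (fun t => f t - g t) i θ = pd f i θ - pd g i θ := by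
  simp [pd, fderiv_fun_sub hf hg]

lemma pd_mul (hf : DifferentiableAt ℝ f θ) (hg : DifferentiableAt ℝ g θ) :
    pd (fun t => f t * g t) i θ = pd f i θ * g θ + f θ * pd g i θ := by
  simp [pd, fderiv_fun_mul hf hg]
  ring

lemma pd_sum {ι : Type*} (s : Finset ι) {f : ι → (Fin d → ℝ) → ℝ}
    (hf : ∀ y ∈ s, DifferentiableAt ℝ (f y) θ) :
    pd (fun t => ∑ y ∈ s, f y t) i θ = ∑ y ∈ s, pd (f y) i θ := by
  simp [pd, fderiv_fun_sum hf]

lemma pd_sum_mul_coord (a : Fin d → ℝ) : pd (fun t => ∑ k, t k * a k) i θ = a i := by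
  have : (fun t : Fin d → ℝ => ∑ k, t k * a k)
      = ⇑(∑ k, a k • ContinuousLinearMap.proj (R := ℝ) (φ := fun _ : Fin d => ℝ) k) := by
    ext t
    simp [mul_comm]
  simp [pd, this, ContinuousLinearMap.fderiv, Pi.single_apply]

lemma contDiff_pd (hf : ContDiff ℝ 2 f) (j : Fin d) : ContDiff ℝ 1 (pd f j) :=
  (hf.fderiv_right (by norm_num)).clm_apply contDiff_const

end PartialDerivative

lemma hasFDerivAt_of_eq_exp_or_eq_zero {d : ℕ} {q φ : (Fin d → ℝ) → ℝ} {θ : Fin d → ℝ}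
    (hφ : DifferentiableAt ℝ φ θ) (hq : q = (fun t => exp (φ t)) ∨ q = 0) :
    HasFDerivAt q (q θ • fderiv ℝ φ θ) θ := by
  rcases hq with rfl | rfl
  · exact hφ.hasFDerivAt.exp
  · rw [Pi.zero_apply, zero_smul]
    exact hasFDerivAt_const (0 : ℝ) θ

section Bartlett

variable {d : ℕ} {ι : Type*} [Fintype ι] {q : ι → (Fin d → ℝ) → ℝ} {φ : ι → (Fin d → ℝ) → ℝ}

lemma sum_mul_pd_eq_zero (hφ : ∀ y, Differentiable ℝ (φ y))
    (hq : ∀ y, q y = (fun t => exp (φ y t)) ∨ q y = 0) (hsum : ∀ t, ∑ y, q y t = 1)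
    (j : Fin d) (θ : Fin d → ℝ) :
    ∑ y, q y θ * pd (φ y) j θ = 0 := by
  have hq' y := hasFDerivAt_of_eq_exp_or_eq_zero (hφ y θ) (hq y)
  have h := pd_sum (i := j) univ fun y _ => (hq' y).differentiableAt
  simp only [hsum, pd_const] at h
  simpa [pd, (hq' _).fderiv] using h.symm

lemma sum_mul_pd_pd_add_pd_mul_pd_eq_zero (hφ : ∀ y, ContDiff ℝ 2 (φ y))
    (hq : ∀ y, q y = (fun t => exp (φ y t)) ∨ q y = 0) (hsum : ∀ t, ∑ y, q y t = 1)
    (i j : Fin d) (θ : Fin d → ℝ) :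
    ∑ y, q y θ * (pd (pd (φ y) j) i θ + pd (φ y) i θ * pd (φ y) j θ) = 0 := by
  have hφ₁ y : Differentiable ℝ (φ y) := (hφ y).differentiable (by norm_num)
  have hq' y := hasFDerivAt_of_eq_exp_or_eq_zero (hφ₁ y θ) (hq y)
  have hpd y : DifferentiableAt ℝ (pd (φ y) j) θ :=
    (contDiff_pd (hφ y) j).differentiable one_ne_zero θ
  have h := pd_sum (i := i) (f := fun y t => q y t * pd (φ y) j t) univ
    fun y _ => (hq' y).differentiableAt.mul (hpd y)
  simp only [sum_mul_pd_eq_zero hφ₁ hq hsum, pd_const] at h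
  rw [eq_comm] at h
  refine Eq.trans (sum_congr rfl fun y _ => ?_) h
  rw [pd_mul (hq' y).differentiableAt (hpd y)]
  simp only [pd, (hq' y).fderiv, smul_apply, smul_eq_mul]
  ring

end Bartlett

lemma sum_stationary_mul_sum_mul_increment {X : Type*} [Fintype X] {w : X → X → ℝ} {p : X → ℝ}
    (hw : ∀ x, ∑ y, w x y = 1) (hp_sum : ∑ x, p x = 1) (hp : ∀ y, ∑ x, p x * w x y = p y)
    (κ : X → ℝ) (c : ℝ) :
    ∑ x, p x * ∑ y, w x y * (c + κ x - κ y) = c := by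
  have hrow x : ∑ y, w x y * (c + κ x - κ y) = c + κ x - ∑ y, w x y * κ y := by
    simp only [mul_sub, sum_sub_distrib, ← sum_mul, hw, one_mul]
  have hflow : ∑ x, p x * ∑ y, w x y * κ y = ∑ y, p y * κ y := by
    simp only [mul_sum, ← mul_assoc]
    rw [sum_comm]
    simp only [← sum_mul, hp]
  simp_rw [hrow]
  simp only [mul_sub, mul_add, sum_sub_distrib, sum_add_distrib, ← sum_mul, hp_sum, hflow]
  ring

section Potential

variable {X : Type*} {d : ℕ} (C : X → X → ℝ) (F : Fin d → X → X → ℝ) (K : (Fin d → ℝ) → X → ℝ)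
  (ψ : (Fin d → ℝ) → ℝ)

def expFamilyPotential (x y : X) (θ : Fin d → ℝ) : ℝ :=
  C x y + ∑ k, θ k * F k x y + K θ y - K θ x - ψ θ

variable {C F K ψ}

lemma contDiff_expFamilyPotential (hK : ∀ x, ContDiff ℝ 2 (fun θ => K θ x))
    (hψ : ContDiff ℝ 2 ψ) (x y : X) : ContDiff ℝ 2 (expFamilyPotential C F K ψ x y) := by
  unfold expFamilyPotential
  fun_prop

lemma pd_expFamilyPotential (hK : ∀ x, ContDiff ℝ 2 (fun θ => K θ x))
    (hψ : ContDiff ℝ 2 ψ) (x y : X) (j : Fin d) :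
    pd (expFamilyPotential C F K ψ x y) j
      = fun θ => F j x y + pd (fun θ => K θ y) j θ - pd (fun θ => K θ x) j θ - pd ψ j θ := by
  ext θ
  have hK₁ z : DifferentiableAt ℝ (fun θ => K θ z) θ := (hK z).differentiable (by norm_num) θ
  have hψ₁ : DifferentiableAt ℝ ψ θ := hψ.differentiable (by norm_num) θ
  unfold expFamilyPotential
  rw [pd_sub (by fun_prop) hψ₁, pd_sub (by fun_prop) (hK₁ x), pd_add (by fun_prop) (hK₁ y),
    pd_const_add, pd_sum_mul_coord]

lemma pd_pd_expFamilyPotential (hK : ∀ x, ContDiff ℝ 2 (fun θ => K θ x))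
    (hψ : ContDiff ℝ 2 ψ) (x y : X) (i j : Fin d) (θ : Fin d → ℝ) :
    pd (pd (expFamilyPotential C F K ψ x y) j) i θ
      = pd (pd (fun θ => K θ y) j) i θ - pd (pd (fun θ => K θ x) j) i θ - pd (pd ψ j) i θ := by
  have hpd {f : (Fin d → ℝ) → ℝ} (hf : ContDiff ℝ 2 f) : DifferentiableAt ℝ (pd f j) θ :=
    (contDiff_pd hf j).differentiable one_ne_zero θ
  rw [pd_expFamilyPotential hK hψ, pd_sub (by fun_prop) (hpd hψ),
    pd_sub (by fun_prop) (hpd (hK x)), pd_const_add]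

end Potential

section ExpFamily

variable {X : Type*} [Fintype X] {d : ℕ} {E : Finset (X × X)} {C : X → X → ℝ}
  {F : Fin d → X → X → ℝ} {K : (Fin d → ℝ) → X → ℝ} {ψ : (Fin d → ℝ) → ℝ}
  {w : (Fin d → ℝ) → X → X → ℝ}

lemma eq_exp_expFamilyPotential_or_eq_zero
    (hlog : ∀ θ x y, (x, y) ∈ E →
      Real.log (w θ x y) = C x y + ∑ i, θ i * F i x y + K θ y - K θ x - ψ θ)
    (hzero : ∀ θ x y, (x, y) ∉ E → w θ x y = 0) (hker : ∀ θ, IsMarkovKernel E (w θ)) (x y : X) :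
    (fun θ => w θ x y) = (fun θ => exp (expFamilyPotential C F K ψ x y θ)) ∨
      (fun θ => w θ x y) = 0 := by
  by_cases hxy : (x, y) ∈ E
  · refine .inl (funext fun θ => ?_)
    rw [expFamilyPotential, ← hlog θ x y hxy, exp_log (((hker θ).2.2 x y).2 hxy)]
  · exact .inr (funext fun θ => hzero θ x y hxy)

lemma sum_edges_mul_pd_log_mul_pd_log
    (hlog : ∀ θ x y, (x, y) ∈ E →
      Real.log (w θ x y) = C x y + ∑ i, θ i * F i x y + K θ y - K θ x - ψ θ)
    (hzero : ∀ θ x y, (x, y) ∉ E → w θ x y = 0) (p : X → ℝ) (i j : Fin d) (θ : Fin d → ℝ) :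
    ∑ e ∈ E, p e.1 * w θ e.1 e.2 *
        pd (fun θ' => Real.log (w θ' e.1 e.2)) i θ * pd (fun θ' => Real.log (w θ' e.1 e.2)) j θ
      = ∑ x, p x * ∑ y, w θ x y *
          (pd (expFamilyPotential C F K ψ x y) i θ * pd (expFamilyPotential C F K ψ x y) j θ) := by
  rw [sum_subset (subset_univ E) fun e _ he => by simp [hzero θ e.1 e.2 he],
    Fintype.sum_prod_type]
  refine sum_congr rfl fun x _ => ?_
  rw [mul_sum]
  refine sum_congr rfl fun y _ => ?_
  by_cases hxy : (x, y) ∈ E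
  · have hlog' : (fun θ' => Real.log (w θ' x y)) = expFamilyPotential C F K ψ x y :=
      funext fun θ' => hlog θ' x y hxy
    rw [hlog']
    ring
  · simp [hzero θ x y hxy]

end ExpFamily

theorem fisher_information_eq_hessian_psi_general
    {X : Type*} [Fintype X] {d : ℕ}
    (E : Finset (X × X))
    (C : X → X → ℝ) (F : Fin d → X → X → ℝ) (K : (Fin d → ℝ) → X → ℝ)
    (ψ : (Fin d → ℝ) → ℝ) (w : (Fin d → ℝ) → X → X → ℝ)
    (hlog : ∀ θ x y, (x, y) ∈ E →
      Real.log (w θ x y) = C x y + ∑ i, θ i * F i x y + K θ y - K θ x - ψ θ)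
    (hzero : ∀ θ x y, (x, y) ∉ E → w θ x y = 0)
    (hker : ∀ θ, IsMarkovKernel E (w θ))
    (hK : ∀ x, ContDiff ℝ 2 (fun θ => K θ x)) (hψ : ContDiff ℝ 2 ψ)
    (p : (Fin d → ℝ) → X → ℝ) (hp : ∀ θ, IsStationaryDistribution (w θ) (p θ))
    (i j : Fin d) (θ : Fin d → ℝ) :
    ∑ e ∈ E, p θ e.1 * w θ e.1 e.2 *
        pd (fun θ' => Real.log (w θ' e.1 e.2)) i θ *
        pd (fun θ' => Real.log (w θ' e.1 e.2)) j θ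
      = pd (fun θ' => pd ψ j θ') i θ := by
  rw [sum_edges_mul_pd_log_mul_pd_log hlog hzero]
  set Φ := expFamilyPotential C F K ψ
  set κ : X → ℝ := fun z => pd (pd (fun θ => K θ z) j) i θ
  have hrow x : ∑ y, w θ x y * (pd (Φ x y) i θ * pd (Φ x y) j θ)
      = ∑ y, w θ x y * (pd (pd ψ j) i θ + κ x - κ y) := by
    have h := sum_mul_pd_pd_add_pd_mul_pd_eq_zero (q := fun y θ => w θ x y)
      (contDiff_expFamilyPotential hK hψ x)
      (eq_exp_expFamilyPotential_or_eq_zero hlog hzero hker x) (fun θ => (hker θ).2.1 x) i j θ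
    simp only [pd_pd_expFamilyPotential hK hψ, mul_add, sum_add_distrib] at h
    rw [eq_neg_of_add_eq_zero_right h, ← sum_neg_distrib]
    exact sum_congr rfl fun y _ => by ring
  simp_rw [hrow]
  exact sum_stationary_mul_sum_mul_increment (hker θ).2.1 (hp θ).2.1 (hp θ).2.2 κ _

/-- Theorem 3. For an exponential family
`{w_θ : θ ∈ ℝ^d} ⊆ W(X,E)` given by `C, F₁, …, F_d, K, ψ` (with `K` and `ψ` twice
continuously differentiable in `θ` and the stationary distribution `p_θ`
continuously differentiable in `θ`), the Fisher information matrix with respect to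
the natural parameter satisfies `g_ij(θ) = ∂_i ∂_j ψ(θ)`. -/
theorem fisher_information_eq_hessian_psi
    {X : Type*} [Fintype X] [DecidableEq X] {d : ℕ}
    (hX : 2 ≤ Fintype.card X)
    (E : Finset (X × X)) (hconn : StronglyConnected E)
    (C : X → X → ℝ) (F : Fin d → X → X → ℝ) (K : (Fin d → ℝ) → X → ℝ)
    (ψ : (Fin d → ℝ) → ℝ) (w : (Fin d → ℝ) → X → X → ℝ)
    (hlog : ∀ θ x y, (x, y) ∈ E →
      Real.log (w θ x y) = C x y + ∑ i, θ i * F i x y + K θ y - K θ x - ψ θ)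
    (hzero : ∀ θ x y, (x, y) ∉ E → w θ x y = 0)
    (hker : ∀ θ, IsMarkovKernel E (w θ))
    (hK : ∀ x, ContDiff ℝ 2 (fun θ => K θ x)) (hψ : ContDiff ℝ 2 ψ)
    (p : (Fin d → ℝ) → X → ℝ) (hp : ∀ θ, IsStationaryDistribution (w θ) (p θ))
    (hpC : ∀ x, ContDiff ℝ 1 (fun θ => p θ x))
    (i j : Fin d) (θ : Fin d → ℝ) :
    ∑ e ∈ E, p θ e.1 * w θ e.1 e.2 *
        pd (fun θ' => Real.log (w θ' e.1 e.2)) i θ *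
        pd (fun θ' => Real.log (w θ' e.1 e.2)) j θ
      = pd (fun θ' => pd ψ j θ') i θ :=
  fisher_information_eq_hessian_psi_general E C F K ψ w hlog hzero hker hK hψ p hp i j θ
end

section
/- Let {w_θ : θ ∈ ℝ^d} ⊆ W(X,E) be an exponential family given by C, F_1, …, F_d, K, ψ, and assume K_θ(x) and ψ(θ) are continuously differentiable in θ. Let p_θ denote the stationary distribution of w_θ. Then for all i and all θ ∈ ℝ^d, the expectation parameter η_i(θ) := Σ_{(x,y)∈E} p_θ(x) w_θ(y|x) F_i(x,y) equals ∂_i ψ(θ), where ∂_i = ∂/∂θ^i. -/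
open scoped BigOperators

/-- `p` is the (positive) stationary distribution of the Markov kernel `w`. -/
def IsStationaryDistr {X : Type*} [Fintype X] (w : X → X → ℝ) (p : X → ℝ) : Prop :=
  (∀ x, 0 < p x) ∧ (∑ x, p x = 1) ∧ (∀ y, ∑ x, p x * w x y = p y)

/-!
Differentiating the row sums `∑_y w_θ(y|x) = 1` along `θ^i` gives, since
`∂_i w_θ(y|x) = w_θ(y|x) (F_i(x,y) + ∂_i K_θ(y) − ∂_i K_θ(x) − ∂_i ψ(θ))`,
that `F_i + ∂_i K_θ ∘ snd − ∂_i K_θ ∘ fst − ∂_i ψ(θ)` has zero conditional mean under `w_θ`.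
Averaging over the stationary distribution `p_θ`, the potential terms `∂_i K_θ` cancel,
leaving `η_i(θ) = ∂_i ψ(θ)`.
-/

open Finset

section StationaryMean

variable {X : Type*} [Fintype X]

theorem stationary_mean_eq_of_sum_mul_sub_eq_zero {w : X → X → ℝ} {p a : X → ℝ}
    {f : X → X → ℝ} {c : ℝ} (hstat : ∀ y, ∑ x, p x * w x y = p y) (hp : ∑ x, p x = 1)
    (hrow : ∀ x, ∑ y, w x y = 1) (h : ∀ x, ∑ y, w x y * (f x y + a y - a x - c) = 0) :
    ∑ x, ∑ y, p x * w x y * f x y = c := by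
  have hcond : ∀ x, ∑ y, w x y * (f x y + a y) = a x + c := by
    intro x
    have := h x
    simp only [mul_sub, sum_sub_distrib, ← sum_mul, hrow, one_mul] at this
    linarith
  have hshift : ∑ x, ∑ y, p x * w x y * a y = ∑ x, p x * a x := by
    rw [sum_comm]
    exact sum_congr rfl fun y _ => by rw [← sum_mul, hstat]
  calc ∑ x, ∑ y, p x * w x y * f x y
      = ∑ x, (p x * ∑ y, w x y * (f x y + a y) - ∑ y, p x * w x y * a y) := by
        refine sum_congr rfl fun x _ => ?_
        rw [mul_sum, ← sum_sub_distrib]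
        exact sum_congr rfl fun y _ => by ring
    _ = ∑ x, p x * (a x + c) - ∑ x, p x * a x := by
        simp only [sum_sub_distrib, hshift, hcond]
    _ = c := by
        simp only [mul_add, sum_add_distrib, ← sum_mul, hp]
        ring

end StationaryMean

section Derivatives

variable {V : Type*} [NormedAddCommGroup V] [NormedSpace ℝ V] {θ : V}

theorem sum_eq_zero_of_hasFDerivAt_of_sum_eq_const {ι : Type*} {s : Finset ι}
    {f : ι → V → ℝ} {L : ι → V →L[ℝ] ℝ} {c : ℝ} (hsum : ∀ θ', ∑ j ∈ s, f j θ' = c)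
    (hf : ∀ j ∈ s, HasFDerivAt (f j) (L j) θ) : ∑ j ∈ s, L j = 0 := by
  have hconst : HasFDerivAt (fun θ' => ∑ j ∈ s, f j θ') (0 : V →L[ℝ] ℝ) θ := by
    simpa only [hsum] using hasFDerivAt_const c θ
  exact (HasFDerivAt.fun_sum hf).unique hconst

theorem HasFDerivAt.of_log_eq {f g : V → ℝ} {g' : V →L[ℝ] ℝ} (hpos : ∀ θ', 0 < f θ')
    (hlog : ∀ θ', Real.log (f θ') = g θ') (hg : HasFDerivAt g g' θ) :
    HasFDerivAt f (f θ • g') θ := by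
  have hf : f = fun θ' => Real.exp (g θ') :=
    funext fun θ' => by rw [← hlog, Real.exp_log (hpos θ')]
  rw [hf]
  exact hg.exp

end Derivatives

theorem hasFDerivAt_sum_mul_const {ι : Type*} [Fintype ι] (b : ι → ℝ) (θ : ι → ℝ) :
    HasFDerivAt (fun θ : ι → ℝ => ∑ j, θ j * b j)
      (∑ j, b j • (ContinuousLinearMap.proj j : (ι → ℝ) →L[ℝ] ℝ)) θ :=
  HasFDerivAt.fun_sum fun j _ => by
    simpa only [mul_comm] using (hasFDerivAt_apply j θ).const_mul (b j)

theorem expectation_parameter_eq_grad_psi_general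
    {X : Type*} [Fintype X] {d : ℕ}
    (E : Finset (X × X))
    (C : X → X → ℝ) (F : Fin d → X → X → ℝ) (K : (Fin d → ℝ) → X → ℝ)
    (ψ : (Fin d → ℝ) → ℝ) (w : (Fin d → ℝ) → X → X → ℝ)
    (hlog : ∀ θ x y, (x, y) ∈ E →
      Real.log (w θ x y) = C x y + ∑ i, θ i * F i x y + K θ y - K θ x - ψ θ)
    (hzero : ∀ θ x y, (x, y) ∉ E → w θ x y = 0)
    (hker : ∀ θ, IsMarkovKernel E (w θ))
    (hK : ∀ x, ContDiff ℝ 1 (fun θ => K θ x)) (hψ : ContDiff ℝ 1 ψ)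
    (p : (Fin d → ℝ) → X → ℝ) (hp : ∀ θ, IsStationaryDistr (w θ) (p θ))
    (i : Fin d) (θ : Fin d → ℝ) :
    ∑ e ∈ E, p θ e.1 * w θ e.1 e.2 * F i e.1 e.2 = pd ψ i θ := by
  have hKθ (x : X) : HasFDerivAt (K · x) (fderiv ℝ (K · x) θ) θ :=
    ((hK x).differentiable one_ne_zero θ).hasFDerivAt
  have hψθ : HasFDerivAt ψ (fderiv ℝ ψ θ) θ := (hψ.differentiable one_ne_zero θ).hasFDerivAt
  have hw (x y : X) : HasFDerivAt (w · x y) (w θ x y •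
      ((∑ j, F j x y • ContinuousLinearMap.proj j) + fderiv ℝ (K · y) θ
        - fderiv ℝ (K · x) θ - fderiv ℝ ψ θ)) θ := by
    by_cases hxy : (x, y) ∈ E
    · exact HasFDerivAt.of_log_eq (fun θ' => ((hker θ').2.2 x y).mpr hxy)
        (fun θ' => hlog θ' x y hxy)
        (((((hasFDerivAt_sum_mul_const _ θ).const_add _).fun_add (hKθ y)).fun_sub
          (hKθ x)).fun_sub hψθ)
    · simpa only [hzero _ x y hxy, zero_smul] using hasFDerivAt_const (0 : ℝ) θ
  have hscore (x : X) : ∑ y, w θ x y *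
      (F i x y + pd (K · y) i θ - pd (K · x) i θ - pd ψ i θ) = 0 := by
    have := congrArg (· (Pi.single i 1))
      (sum_eq_zero_of_hasFDerivAt_of_sum_eq_const (fun θ' => (hker θ').2.1 x) fun y _ => hw x y)
    simpa [pd, Pi.single_apply] using this
  have hsupport : ∑ e ∈ E, p θ e.1 * w θ e.1 e.2 * F i e.1 e.2
      = ∑ e : X × X, p θ e.1 * w θ e.1 e.2 * F i e.1 e.2 :=
    sum_subset (subset_univ E) fun e _ he => by rw [hzero θ e.1 e.2 he, mul_zero, zero_mul]
  rw [hsupport, Fintype.sum_prod_type]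
  exact stationary_mean_eq_of_sum_mul_sub_eq_zero (hp θ).2.2 (hp θ).2.1 (hker θ).2.1 hscore

/-- expectation parameters. For an exponential family
`{w_θ : θ ∈ ℝ^d} ⊆ W(X,E)` given by `C, F₁, …, F_d, K, ψ` (with `K` and `ψ`
continuously differentiable in `θ`), the expectation parameter
`η_i(θ) = Σ_{(x,y)∈E} p_θ(x) w_θ(y|x) F_i(x,y)` equals `∂_i ψ(θ)`. -/
theorem expectation_parameter_eq_grad_psi
    {X : Type*} [Fintype X] [DecidableEq X] {d : ℕ}
    (hX : 2 ≤ Fintype.card X)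
    (E : Finset (X × X)) (hconn : StronglyConnected E)
    (C : X → X → ℝ) (F : Fin d → X → X → ℝ) (K : (Fin d → ℝ) → X → ℝ)
    (ψ : (Fin d → ℝ) → ℝ) (w : (Fin d → ℝ) → X → X → ℝ)
    (hlog : ∀ θ x y, (x, y) ∈ E →
      Real.log (w θ x y) = C x y + ∑ i, θ i * F i x y + K θ y - K θ x - ψ θ)
    (hzero : ∀ θ x y, (x, y) ∉ E → w θ x y = 0)
    (hker : ∀ θ, IsMarkovKernel E (w θ))
    (hK : ∀ x, ContDiff ℝ 1 (fun θ => K θ x)) (hψ : ContDiff ℝ 1 ψ)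
    (p : (Fin d → ℝ) → X → ℝ) (hp : ∀ θ, IsStationaryDistr (w θ) (p θ))
    (i : Fin d) (θ : Fin d → ℝ) :
    ∑ e ∈ E, p θ e.1 * w θ e.1 e.2 * F i e.1 e.2 = pd ψ i θ :=
  expectation_parameter_eq_grad_psi_general E C F K ψ w hlog hzero hker hK hψ p hp i θ
end

section
/- Let {w_θ : θ ∈ ℝ^d} ⊆ W(X,E) be an exponential family given by C, F_1, …, F_d, K, ψ. For θ ∈ ℝ^d let p_θ be the stationary distribution of w_θ, set p_θ^(2)(x,y) = p_θ(x) w_θ(y|x), η_i(θ) = Σ_{(x,y)∈E} p_θ^(2)(x,y) F_i(x,y), and φ(θ) = Σ_{i=1}^d θ^i η_i(θ) − ψ(θ). Then for all θ_1, θ_2 ∈ ℝ^d, the canonical divergence D(θ_1 | θ_2) := φ(θ_1) + ψ(θ_2) − Σ_{i=1}^d η_i(θ_1) θ_2^i satisfies D(θ_1 | θ_2) = Σ_{(x,y)∈E} p_{θ_1}^(2)(x,y) log( w_{θ_1}(y|x) / w_{θ_2}(y|x) ). -/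
open scoped BigOperators

/-- `p` is the (positive) stationary distribution of the Markov kernel `w`. -/
def IsStationaryDistrib {X : Type*} [Fintype X] (w : X → X → ℝ) (p : X → ℝ) : Prop :=
  (∀ x, 0 < p x) ∧ (∑ x, p x = 1) ∧ (∀ y, ∑ x, p x * w x y = p y)


/-!
On an edge, `log (w_{θ₁}/w_{θ₂})` is `Σᵢ (θ₁ⁱ - θ₂ⁱ) Fᵢ` plus the coboundary
`ΔK(y) - ΔK(x)` of `ΔK = K_{θ₁} - K_{θ₂}` plus the constant `ψ(θ₂) - ψ(θ₁)`.
Integrating against the stationary pair distribution `p_{θ₁}(x) w_{θ₁}(y|x)`,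
the coboundary integrates to zero by stationarity, the constant survives because
the pair distribution has mass one, and the linear part gives `Σᵢ (θ₁ⁱ - θ₂ⁱ) ηᵢ(θ₁)`.
-/

open Finset

section PairDistribution

variable {X : Type*} [Fintype X] {p : X → ℝ} {w : X → X → ℝ}

theorem sum_edges_pair_eq_sum_univ {E : Finset (X × X)}
    (hzero : ∀ x y, (x, y) ∉ E → w x y = 0) (f : X → X → ℝ) :
    ∑ e ∈ E, p e.1 * w e.1 e.2 * f e.1 e.2 = ∑ x, ∑ y, p x * w x y * f x y := by
  rw [← Fintype.sum_prod_type (f := fun e : X × X => p e.1 * w e.1 e.2 * f e.1 e.2)]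
  exact sum_subset (subset_univ E) fun e _ he => by simp [hzero e.1 e.2 he]

theorem sum_pair_coboundary_eq_zero (hrow : ∀ x, ∑ y, w x y = 1)
    (hstat : ∀ y, ∑ x, p x * w x y = p y) (g : X → ℝ) :
    ∑ x, ∑ y, p x * w x y * (g y - g x) = 0 := by
  have hy : ∑ x, ∑ y, p x * w x y * g y = ∑ y, p y * g y := by
    rw [sum_comm]
    exact sum_congr rfl fun y _ => by rw [← sum_mul, hstat y]
  have hx : ∑ x, ∑ y, p x * w x y * g x = ∑ x, p x * g x :=
    sum_congr rfl fun x _ => by rw [← sum_mul, ← mul_sum, hrow x, mul_one]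
  simp only [mul_sub, sum_sub_distrib, hy, hx, sub_self]

theorem sum_pair_add_coboundary_add_const (hrow : ∀ x, ∑ y, w x y = 1)
    (hmass : ∑ x, p x = 1) (hstat : ∀ y, ∑ x, p x * w x y = p y)
    (f : X → X → ℝ) (g : X → ℝ) (c : ℝ) :
    ∑ x, ∑ y, p x * w x y * (f x y + (g y - g x) + c)
      = ∑ x, ∑ y, p x * w x y * f x y + c := by
  have hconst : ∑ x, ∑ y, p x * w x y * c = c := by
    simp only [← sum_mul, ← mul_sum, hrow, mul_one, hmass, one_mul]
  simp only [mul_add, sum_add_distrib, sum_pair_coboundary_eq_zero hrow hstat g, add_zero,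
    hconst]

end PairDistribution

theorem log_div_eq_of_exp_family {X : Type*} {d : ℕ} {C : X → X → ℝ}
    {F : Fin d → X → X → ℝ} {K : (Fin d → ℝ) → X → ℝ} {ψ : (Fin d → ℝ) → ℝ}
    {w : (Fin d → ℝ) → X → X → ℝ} {θ₁ θ₂ : Fin d → ℝ} {x y : X}
    (hlog : ∀ θ, Real.log (w θ x y) = C x y + ∑ i, θ i * F i x y + K θ y - K θ x - ψ θ)
    (h₁ : w θ₁ x y ≠ 0) (h₂ : w θ₂ x y ≠ 0) :
    Real.log (w θ₁ x y / w θ₂ x y)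
      = ∑ i, (θ₁ i - θ₂ i) * F i x y + ((K θ₁ y - K θ₂ y) - (K θ₁ x - K θ₂ x))
          + (ψ θ₂ - ψ θ₁) := by
  simp only [Real.log_div h₁ h₂, hlog, sub_mul, sum_sub_distrib]
  ring

theorem sum_mul_sum_mul_comm {ι κ : Type*} (s : Finset ι) (t : Finset κ) (P : ι → ℝ)
    (a : κ → ℝ) (F : κ → ι → ℝ) :
    ∑ e ∈ s, P e * ∑ i ∈ t, a i * F i e = ∑ i ∈ t, a i * ∑ e ∈ s, P e * F i e := by
  simp only [mul_sum]
  rw [sum_comm]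
  exact sum_congr rfl fun i _ => sum_congr rfl fun e _ => by ring

theorem canonical_divergence_eq_divergence_rate_general
    {X : Type*} [Fintype X] {d : ℕ}
    (E : Finset (X × X))
    (C : X → X → ℝ) (F : Fin d → X → X → ℝ) (K : (Fin d → ℝ) → X → ℝ)
    (ψ : (Fin d → ℝ) → ℝ) (w : (Fin d → ℝ) → X → X → ℝ)
    (hlog : ∀ θ x y, (x, y) ∈ E →
      Real.log (w θ x y) = C x y + ∑ i, θ i * F i x y + K θ y - K θ x - ψ θ)
    (hzero : ∀ θ x y, (x, y) ∉ E → w θ x y = 0)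
    (hker : ∀ θ, IsMarkovKernel E (w θ))
    (p : (Fin d → ℝ) → X → ℝ) (hp : ∀ θ, IsStationaryDistrib (w θ) (p θ))
    (θ₁ θ₂ : Fin d → ℝ) :
    ((∑ i, θ₁ i * (∑ e ∈ E, p θ₁ e.1 * w θ₁ e.1 e.2 * F i e.1 e.2)) - ψ θ₁)
        + ψ θ₂ - ∑ i, (∑ e ∈ E, p θ₁ e.1 * w θ₁ e.1 e.2 * F i e.1 e.2) * θ₂ i
      = ∑ e ∈ E, p θ₁ e.1 * w θ₁ e.1 e.2 *
          Real.log (w θ₁ e.1 e.2 / w θ₂ e.1 e.2) := by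
  have hne : ∀ θ, ∀ e ∈ E, w θ e.1 e.2 ≠ 0 := fun θ e he =>
    (((hker θ).2.2 e.1 e.2).2 he).ne'
  obtain ⟨-, hmass, hstat⟩ := hp θ₁
  calc _ = ∑ i, (θ₁ i - θ₂ i) * ∑ e ∈ E, p θ₁ e.1 * w θ₁ e.1 e.2 * F i e.1 e.2
          + (ψ θ₂ - ψ θ₁) := by
        simp only [sub_mul, sum_sub_distrib, mul_comm _ (θ₂ _)]
        ring
    _ = ∑ x, ∑ y, p θ₁ x * w θ₁ x y * ∑ i, (θ₁ i - θ₂ i) * F i x y + (ψ θ₂ - ψ θ₁) := by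
        rw [← sum_edges_pair_eq_sum_univ (hzero θ₁) fun x y => ∑ i, (θ₁ i - θ₂ i) * F i x y,
          sum_mul_sum_mul_comm]
    _ = ∑ x, ∑ y, p θ₁ x * w θ₁ x y * (∑ i, (θ₁ i - θ₂ i) * F i x y
          + ((K θ₁ y - K θ₂ y) - (K θ₁ x - K θ₂ x)) + (ψ θ₂ - ψ θ₁)) :=
        (sum_pair_add_coboundary_add_const (hker θ₁).2.1 hmass hstat _ _ _).symm
    _ = _ := by
        rw [← sum_edges_pair_eq_sum_univ (hzero θ₁)]
        refine sum_congr rfl fun e he => ?_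
        rw [log_div_eq_of_exp_family (fun θ => hlog θ e.1 e.2 he) (hne θ₁ e he)
          (hne θ₂ e he)]

/-- canonical divergence. For an exponential family
`{w_θ} ⊆ W(X,E)` with stationary distributions `p_θ`, put
`p_θ⁽²⁾(x,y) = p_θ(x) w_θ(y|x)`, `η_i(θ) = Σ_{(x,y)∈E} p_θ⁽²⁾(x,y) F_i(x,y)` and
`φ(θ) = Σ_i θⁱ η_i(θ) − ψ(θ)`.  Then the canonical divergence
`D(θ₁|θ₂) = φ(θ₁) + ψ(θ₂) − Σ_i η_i(θ₁) θ₂ⁱ` equals the divergence rate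
`Σ_{(x,y)∈E} p_{θ₁}⁽²⁾(x,y) log(w_{θ₁}(y|x)/w_{θ₂}(y|x))`. -/
theorem canonical_divergence_eq_divergence_rate
    {X : Type*} [Fintype X] [DecidableEq X] {d : ℕ}
    (hX : 2 ≤ Fintype.card X)
    (E : Finset (X × X)) (hconn : StronglyConnected E)
    (C : X → X → ℝ) (F : Fin d → X → X → ℝ) (K : (Fin d → ℝ) → X → ℝ)
    (ψ : (Fin d → ℝ) → ℝ) (w : (Fin d → ℝ) → X → X → ℝ)
    (hlog : ∀ θ x y, (x, y) ∈ E →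
      Real.log (w θ x y) = C x y + ∑ i, θ i * F i x y + K θ y - K θ x - ψ θ)
    (hzero : ∀ θ x y, (x, y) ∉ E → w θ x y = 0)
    (hker : ∀ θ, IsMarkovKernel E (w θ))
    (p : (Fin d → ℝ) → X → ℝ) (hp : ∀ θ, IsStationaryDistrib (w θ) (p θ))
    (θ₁ θ₂ : Fin d → ℝ) :
    ((∑ i, θ₁ i * (∑ e ∈ E, p θ₁ e.1 * w θ₁ e.1 e.2 * F i e.1 e.2)) - ψ θ₁)
        + ψ θ₂ - ∑ i, (∑ e ∈ E, p θ₁ e.1 * w θ₁ e.1 e.2 * F i e.1 e.2) * θ₂ i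
      = ∑ e ∈ E, p θ₁ e.1 * w θ₁ e.1 e.2 *
          Real.log (w θ₁ e.1 e.2 / w θ₂ e.1 e.2) :=
  canonical_divergence_eq_divergence_rate_general E C F K ψ w hlog hzero hker p hp θ₁ θ₂
end

section
/- Let w_1, w_2 ∈ W(X,E) and let q_1, q_2 be strictly positive probability distributions on X. For n ≥ 1 and x^n = (x_1, …, x_n) ∈ X^n define q_i^(n)(x^n) = q_i(x_1) Π_{t=1}^{n−1} w_i(x_{t+1}|x_t) for i = 1, 2, and let D(q_1^(n) | q_2^(n)) = Σ_{x^n : (x_t,x_{t+1})∈E for all t} q_1^(n)(x^n) log( q_1^(n)(x^n) / q_2^(n)(x^n) ). Then (1/n) D(q_1^(n) | q_2^(n)) converges as n → ∞ to Σ_{(x,y)∈E} p_{w_1}(x) w_1(y|x) log( w_1(y|x) / w_2(y|x) ). -/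
open scoped BigOperators

open Finset Filter Topology Matrix

/-! Along a path of positive probability the log-likelihood ratio splits into
`log (q₁ / q₂)` at the starting point plus the one-step terms `log (w₁ / w₂)`. Averaging over
the chain `(w₁, q₁)`, the divergence of the path laws is therefore a constant plus
`∑_{t<n} ⟨μ_t, r⟩`, where `μ_t` is the law of the `t`-th state and `r x` is the divergence of
the rows `w₁ x ·` and `w₂ x ·`. The Cesàro averages of `μ_t` converge to `p₁`: they lie in the
compact simplex, are invariant up to `O(1/n)`, and by strong connectivity `p₁` is the only
invariant probability vector. -/

namespace MarkovChain

variable {X : Type*}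

def pathProb (w : X → X → ℝ) (q : X → ℝ) (n : ℕ) (xs : Fin (n + 1) → X) : ℝ :=
  q (xs 0) * ∏ t : Fin n, w (xs t.castSucc) (xs t.succ)

lemma pathProb_snoc (w : X → X → ℝ) (q : X → ℝ) {n : ℕ} (ys : Fin (n + 1) → X) (z : X) :
    pathProb w q (n + 1) (Fin.snoc ys z) = pathProb w q n ys * w (ys (Fin.last n)) z := by
  have hzero : (Fin.snoc ys z : Fin (n + 2) → X) 0 = ys 0 := Fin.snoc_castSucc (i := 0) ..
  simp only [pathProb, Fin.prod_univ_castSucc, hzero, Fin.succ_castSucc, Fin.snoc_castSucc,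
    Fin.succ_last, Fin.snoc_last, mul_assoc]

variable [Fintype X]

def marginal (w : X → X → ℝ) (q : X → ℝ) : ℕ → X → ℝ
  | 0 => q
  | n + 1 => marginal w q n ᵥ* Matrix.of w

section Paths

variable (w : X → X → ℝ) (q : X → ℝ)

lemma sum_pathProb_zero_mul (g : X → ℝ) :
    ∑ xs : Fin 1 → X, pathProb w q 0 xs * g (xs 0) = ∑ x, q x * g x := by
  rw [← (Equiv.funUnique (Fin 1) X).symm.sum_comp]
  simp [pathProb]

lemma sum_pathProb_succ_mul {n : ℕ} (G : (Fin (n + 2) → X) → ℝ) :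
    ∑ xs, pathProb w q (n + 1) xs * G xs
      = ∑ ys : Fin (n + 1) → X, ∑ z, pathProb w q n ys * w (ys (Fin.last n)) z *
          G (Fin.snoc ys z) := by
  rw [← (Fin.snocEquiv fun _ => X).sum_comp, Fintype.sum_prod_type, sum_comm]
  simp only [Fin.snocEquiv, Equiv.coe_fn_mk, pathProb_snoc]

lemma sum_pathProb_mul_last (g : X → ℝ) (n : ℕ) :
    ∑ xs, pathProb w q n xs * g (xs (Fin.last n)) = marginal w q n ⬝ᵥ g := by
  induction n generalizing g with
  | zero => exact sum_pathProb_zero_mul w q g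
  | succ n ih =>
    simp only [sum_pathProb_succ_mul, Fin.snoc_last, mul_assoc, ← mul_sum]
    rw [marginal, ← dotProduct_mulVec, ← ih]
    rfl

variable {w}

lemma sum_pathProb_mul_head (hw : ∀ x, ∑ y, w x y = 1) (g : X → ℝ) (n : ℕ) :
    ∑ xs, pathProb w q n xs * g (xs 0) = ∑ x, q x * g x := by
  induction n with
  | zero => exact sum_pathProb_zero_mul w q g
  | succ n ih =>
    have hzero (ys : Fin (n + 1) → X) (z : X) : (Fin.snoc ys z : Fin (n + 2) → X) 0 = ys 0 :=
      Fin.snoc_castSucc (i := 0) ..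
    simp only [sum_pathProb_succ_mul, hzero, mul_right_comm _ _ (g _), ← mul_sum, hw,
      mul_one, ih]

lemma sum_pathProb_mul_sum_steps (hw : ∀ x, ∑ y, w x y = 1) (L : X → X → ℝ) (n : ℕ) :
    ∑ xs, pathProb w q n xs * ∑ t : Fin n, L (xs t.castSucc) (xs t.succ)
      = ∑ t ∈ range n, marginal w q t ⬝ᵥ fun x => ∑ y, w x y * L x y := by
  induction n with
  | zero => simp
  | succ n ih =>
    have hsteps (ys : Fin (n + 1) → X) (z : X) :
        ∑ t : Fin (n + 1), L ((Fin.snoc ys z : Fin (n + 2) → X) t.castSucc)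
          ((Fin.snoc ys z : Fin (n + 2) → X) t.succ)
          = ∑ t : Fin n, L (ys t.castSucc) (ys t.succ) + L (ys (Fin.last n)) z := by
      simp only [Fin.sum_univ_castSucc, Fin.succ_castSucc, Fin.snoc_castSucc, Fin.succ_last,
        Fin.snoc_last]
    rw [sum_range_succ, ← ih, ← sum_pathProb_mul_last, sum_pathProb_succ_mul,
      ← sum_add_distrib]
    refine sum_congr rfl fun ys _ => ?_
    simp only [hsteps, mul_add, sum_add_distrib, mul_right_comm _ _ (∑ t : Fin n, _),
      ← mul_sum, hw, mul_one, mul_assoc]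

end Paths

section Stationary

variable {E : Finset (X × X)} {w : X → X → ℝ}

lemma _root_.IsMarkovKernel.sum_vecMul (hw : IsMarkovKernel E w) (v : X → ℝ) :
    ∑ y, (v ᵥ* Matrix.of w) y = ∑ x, v x := by
  simp only [vecMul, dotProduct, of_apply]
  rw [sum_comm]
  simp only [← mul_sum, hw.2.1, mul_one]

lemma _root_.IsMarkovKernel.vecMul_mem_stdSimplex (hw : IsMarkovKernel E w) {v : X → ℝ}
    (hv : v ∈ stdSimplex ℝ X) : v ᵥ* Matrix.of w ∈ stdSimplex ℝ X :=
  ⟨fun y => sum_nonneg fun x _ => mul_nonneg (hv.1 x) (hw.1 x y),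
    (hw.sum_vecMul v).trans hv.2⟩

lemma _root_.IsMarkovKernel.marginal_mem_stdSimplex (hw : IsMarkovKernel E w) {q : X → ℝ}
    (hq : q ∈ stdSimplex ℝ X) (n : ℕ) : marginal w q n ∈ stdSimplex ℝ X := by
  induction n with
  | zero => exact hq
  | succ n ih => exact hw.vecMul_mem_stdSimplex ih

lemma _root_.IsStationaryDistrib.vecMul_eq {p : X → ℝ} (hp : IsStationaryDistrib w p) :
    p ᵥ* Matrix.of w = p :=
  funext hp.2.2

/-- Zeros of a nonnegative invariant vector propagate backwards along edges. -/
lemma eq_zero_of_vecMul_eq (hconn : StronglyConnected E) (hw : IsMarkovKernel E w)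
    {h : X → ℝ} (hh : ∀ x, 0 ≤ h x) (hinv : h ᵥ* Matrix.of w = h) {x₀ : X} (hx₀ : h x₀ = 0) :
    h = 0 := by
  have hback : ∀ a b, (a, b) ∈ E → h b = 0 → h a = 0 := by
    intro a b hab hb
    have hsum : ∑ x, h x * w x b = 0 := (congrFun hinv b).trans hb
    have hterm := (sum_eq_zero_iff_of_nonneg fun x _ => mul_nonneg (hh x) (hw.1 x b)).mp
      hsum a (mem_univ a)
    exact (mul_eq_zero.mp hterm).resolve_right ((hw.2.2 a b).mpr hab).ne'
  funext y
  exact Relation.TransGen.head_induction_on (hconn y x₀) (fun hab => hback _ _ hab hx₀)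
    fun hab _ hb => hback _ _ hab hb

/-- Choosing `c` as the least ratio `v x / p x` makes `v - c • p` a nonnegative invariant
vector with a zero. -/
lemma _root_.IsStationaryDistrib.eq_of_vecMul_eq (hconn : StronglyConnected E)
    (hw : IsMarkovKernel E w) {p : X → ℝ} (hp : IsStationaryDistrib w p) {v : X → ℝ}
    (hv : v ᵥ* Matrix.of w = v) (hvs : ∑ x, v x = 1) : v = p := by
  have hne : (univ : Finset X).Nonempty := nonempty_of_sum_ne_zero (hp.2.1 ▸ one_ne_zero)
  obtain ⟨x₀, -, hmin⟩ := exists_min_image univ (fun x => v x / p x) hne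
  set c := v x₀ / p x₀
  have hzero : v - c • p = 0 := by
    refine eq_zero_of_vecMul_eq hconn hw (fun x => ?_) ?_ (x₀ := x₀) ?_
    · have := (le_div_iff₀ (hp.1 x)).mp (hmin x (mem_univ x))
      simp only [Pi.sub_apply, Pi.smul_apply, smul_eq_mul]
      linarith
    · rw [sub_vecMul, smul_vecMul, hv, hp.vecMul_eq]
    · simp [c, div_mul_cancel₀ _ (hp.1 x₀).ne']
  have hc : c = 1 := by
    have := congrArg (fun u => ∑ x, u x) (sub_eq_zero.mp hzero)
    simpa [← mul_sum, hp.2.1, hvs] using this.symm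
  rwa [hc, one_smul, sub_eq_zero] at hzero

lemma tendsto_inv_smul_of_mem_stdSimplex {f : ℕ → X → ℝ} (hf : ∀ n, f n ∈ stdSimplex ℝ X) :
    Tendsto (fun n : ℕ => ((n : ℝ) + 1)⁻¹ • f n) atTop (𝓝 0) := by
  have hinv : Tendsto (fun n : ℕ => ((n : ℝ) + 1)⁻¹) atTop (𝓝 0) := by
    simpa only [one_div] using tendsto_one_div_add_atTop_nhds_zero_nat (𝕜 := ℝ)
  exact hinv.zero_smul_isBoundedUnder_le (isBoundedUnder_of
    ⟨1, fun n => mem_closedBall_zero_iff.mp (stdSimplex_subset_closedBall (hf n))⟩)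

noncomputable def cesaroMarginal (w : X → X → ℝ) (q : X → ℝ) (n : ℕ) : X → ℝ :=
  ((n : ℝ) + 1)⁻¹ • ∑ t ∈ range (n + 1), marginal w q t

variable {q : X → ℝ}

lemma _root_.IsMarkovKernel.cesaroMarginal_mem_stdSimplex (hw : IsMarkovKernel E w)
    (hq : q ∈ stdSimplex ℝ X) (n : ℕ) : cesaroMarginal w q n ∈ stdSimplex ℝ X := by
  rw [cesaroMarginal, smul_sum]
  refine (convex_stdSimplex ℝ X).sum_mem (fun _ _ => by positivity) ?_
    fun t _ => hw.marginal_mem_stdSimplex hq t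
  rw [sum_const, card_range, nsmul_eq_mul]
  push_cast
  exact mul_inv_cancel₀ (by positivity)

lemma cesaroMarginal_vecMul_sub (n : ℕ) :
    cesaroMarginal w q n ᵥ* Matrix.of w - cesaroMarginal w q n
      = ((n : ℝ) + 1)⁻¹ • (marginal w q (n + 1) - q) := by
  rw [cesaroMarginal, smul_vecMul, sum_vecMul, ← smul_sub, ← sum_sub_distrib]
  exact congrArg _ (sum_range_sub (marginal w q) (n + 1))

lemma _root_.IsMarkovKernel.tendsto_cesaroMarginal (hconn : StronglyConnected E)
    (hw : IsMarkovKernel E w) (hq : q ∈ stdSimplex ℝ X) {p : X → ℝ}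
    (hp : IsStationaryDistrib w p) : Tendsto (cesaroMarginal w q) atTop (𝓝 p) := by
  refine (isCompact_stdSimplex ℝ X).tendsto_nhds_of_unique_mapClusterPt
    (Eventually.of_forall (hw.cesaroMarginal_mem_stdSimplex hq)) fun v hv hcluster => ?_
  have hdefect : Tendsto (fun n => cesaroMarginal w q n ᵥ* Matrix.of w - cesaroMarginal w q n)
      atTop (𝓝 0) := by
    simp only [cesaroMarginal_vecMul_sub, smul_sub]
    simpa using (tendsto_inv_smul_of_mem_stdSimplex fun n => hw.marginal_mem_stdSimplex hq
      (n + 1)).sub (tendsto_inv_smul_of_mem_stdSimplex fun _ => hq)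
  have hcont : Continuous fun u : X → ℝ => u ᵥ* Matrix.of w - u :=
    (continuous_id.matrix_vecMul continuous_const).sub continuous_id
  have hinv : v ᵥ* Matrix.of w - v = 0 :=
    eq_of_nhds_neBot ((hcluster.continuousAt_comp hcont.continuousAt).clusterPt.mono hdefect)
  exact hp.eq_of_vecMul_eq hconn hw (sub_eq_zero.mp hinv) hv.2

lemma _root_.IsMarkovKernel.tendsto_inv_smul_sum_marginal (hconn : StronglyConnected E)
    (hw : IsMarkovKernel E w) (hq : q ∈ stdSimplex ℝ X) {p : X → ℝ}
    (hp : IsStationaryDistrib w p) :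
    Tendsto (fun n : ℕ => ((n : ℝ) + 1)⁻¹ • ∑ t ∈ range n, marginal w q t) atTop (𝓝 p) := by
  have := (hw.tendsto_cesaroMarginal hconn hq hp).sub
    (tendsto_inv_smul_of_mem_stdSimplex (hw.marginal_mem_stdSimplex hq))
  rw [sub_zero] at this
  refine this.congr fun n => ?_
  rw [cesaroMarginal, sum_range_succ, smul_add, add_sub_cancel_right]

end Stationary

section Divergence

variable {E : Finset (X × X)} {w w₁ w₂ : X → X → ℝ} {q q₁ q₂ : X → ℝ}

lemma _root_.IsMarkovKernel.eq_zero_of_notMem_s17 (hw : IsMarkovKernel E w) {x y : X}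
    (h : (x, y) ∉ E) : w x y = 0 :=
  le_antisymm (not_lt.mp (mt (hw.2.2 x y).mp h)) (hw.1 x y)

lemma _root_.IsMarkovKernel.pathProb_eq_zero (hw : IsMarkovKernel E w) {n : ℕ}
    {xs : Fin (n + 1) → X} (h : ¬ ∀ t : Fin n, (xs t.castSucc, xs t.succ) ∈ E) :
    pathProb w q n xs = 0 := by
  obtain ⟨t, ht⟩ := not_forall.mp h
  exact mul_eq_zero_of_right _ (prod_eq_zero (mem_univ t) (hw.eq_zero_of_notMem_s17 ht))

lemma log_pathProb_div_pathProb (hw₁ : IsMarkovKernel E w₁) (hw₂ : IsMarkovKernel E w₂)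
    {n : ℕ} {xs : Fin (n + 1) → X} (hq₁ : 0 < q₁ (xs 0)) (hq₂ : 0 < q₂ (xs 0))
    (h : ∀ t : Fin n, (xs t.castSucc, xs t.succ) ∈ E) :
    Real.log (pathProb w₁ q₁ n xs / pathProb w₂ q₂ n xs)
      = Real.log (q₁ (xs 0) / q₂ (xs 0))
        + ∑ t : Fin n,
            Real.log (w₁ (xs t.castSucc) (xs t.succ) / w₂ (xs t.castSucc) (xs t.succ)) := by
  have hratio (t : Fin n) : 0 < w₁ (xs t.castSucc) (xs t.succ) / w₂ (xs t.castSucc) (xs t.succ) :=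
    div_pos ((hw₁.2.2 _ _).mpr (h t)) ((hw₂.2.2 _ _).mpr (h t))
  rw [pathProb, pathProb, mul_div_mul_comm, ← prod_div_distrib,
    Real.log_mul (div_pos hq₁ hq₂).ne' (prod_pos fun t _ => hratio t).ne',
    Real.log_prod fun t _ => (hratio t).ne']

noncomputable def rowDivergence (w₁ w₂ : X → X → ℝ) (x : X) : ℝ :=
  ∑ y, w₁ x y * Real.log (w₁ x y / w₂ x y)

lemma _root_.IsMarkovKernel.sum_edges_eq_dotProduct (hw : IsMarkovKernel E w) (p : X → ℝ)
    (f : X → X → ℝ) :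
    ∑ e ∈ E, p e.1 * w e.1 e.2 * f e.1 e.2 = p ⬝ᵥ fun x => ∑ y, w x y * f x y := by
  rw [sum_subset (subset_univ E) fun e _ he => by rw [hw.eq_zero_of_notMem_s17 he]; ring,
    ← univ_product_univ, sum_product]
  simp only [dotProduct, mul_sum, mul_assoc]

lemma sum_pathDivergence_eq [DecidableEq X] (hw₁ : IsMarkovKernel E w₁)
    (hw₂ : IsMarkovKernel E w₂) (hq₁ : ∀ x, 0 < q₁ x) (hq₂ : ∀ x, 0 < q₂ x) (n : ℕ) :
    ∑ xs : Fin (n + 1) → X, (if ∀ t : Fin n, (xs t.castSucc, xs t.succ) ∈ E then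
        pathProb w₁ q₁ n xs * Real.log (pathProb w₁ q₁ n xs / pathProb w₂ q₂ n xs) else 0)
      = ∑ x, q₁ x * Real.log (q₁ x / q₂ x)
        + ∑ t ∈ range n, marginal w₁ q₁ t ⬝ᵥ rowDivergence w₁ w₂ := by
  have hterm (xs : Fin (n + 1) → X) :
      (if ∀ t : Fin n, (xs t.castSucc, xs t.succ) ∈ E then
        pathProb w₁ q₁ n xs * Real.log (pathProb w₁ q₁ n xs / pathProb w₂ q₂ n xs) else 0)
      = pathProb w₁ q₁ n xs * (Real.log (q₁ (xs 0) / q₂ (xs 0)) + ∑ t : Fin n,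
          Real.log (w₁ (xs t.castSucc) (xs t.succ) / w₂ (xs t.castSucc) (xs t.succ))) := by
    split_ifs with h
    · rw [log_pathProb_div_pathProb hw₁ hw₂ (hq₁ _) (hq₂ _) h]
    · rw [hw₁.pathProb_eq_zero h, zero_mul]
  simp only [hterm, mul_add, sum_add_distrib]
  rw [sum_pathProb_mul_head q₁ hw₁.2.1 fun x => Real.log (q₁ x / q₂ x),
    sum_pathProb_mul_sum_steps q₁ hw₁.2.1 fun x y => Real.log (w₁ x y / w₂ x y)]
  rfl

end Divergence

end MarkovChain

open MarkovChain

theorem divergence_rate_limit_general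
    {X : Type*} [Fintype X] [DecidableEq X]
    (E : Finset (X × X)) (hconn : StronglyConnected E)
    (w₁ w₂ : X → X → ℝ) (hw₁ : IsMarkovKernel E w₁) (hw₂ : IsMarkovKernel E w₂)
    (q₁ q₂ : X → ℝ) (hq₁ : ∀ x, 0 < q₁ x) (hq₁s : ∑ x, q₁ x = 1)
    (hq₂ : ∀ x, 0 < q₂ x)
    (p₁ : X → ℝ) (hp₁ : IsStationaryDistrib w₁ p₁) :
    Filter.Tendsto (fun n : ℕ =>
      (∑ xs : Fin (n + 1) → X,
        if ∀ t : Fin n, (xs t.castSucc, xs t.succ) ∈ E then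
          (q₁ (xs 0) * ∏ t : Fin n, w₁ (xs t.castSucc) (xs t.succ)) *
            Real.log ((q₁ (xs 0) * ∏ t : Fin n, w₁ (xs t.castSucc) (xs t.succ)) /
              (q₂ (xs 0) * ∏ t : Fin n, w₂ (xs t.castSucc) (xs t.succ)))
        else 0) / (n + 1 : ℝ))
      Filter.atTop
      (nhds (∑ e ∈ E, p₁ e.1 * w₁ e.1 e.2 * Real.log (w₁ e.1 e.2 / w₂ e.1 e.2))) := by
  have hq₁simplex : q₁ ∈ stdSimplex ℝ X := ⟨fun x => (hq₁ x).le, hq₁s⟩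
  have hinitial : Tendsto (fun n : ℕ => ((n : ℝ) + 1)⁻¹ * ∑ x, q₁ x * Real.log (q₁ x / q₂ x))
      atTop (𝓝 0) := by
    simpa using (tendsto_one_div_add_atTop_nhds_zero_nat (𝕜 := ℝ)).mul_const
      (∑ x, q₁ x * Real.log (q₁ x / q₂ x))
  have hsteps : Tendsto (fun n : ℕ =>
      (((n : ℝ) + 1)⁻¹ • ∑ t ∈ range n, marginal w₁ q₁ t) ⬝ᵥ rowDivergence w₁ w₂)
      atTop (𝓝 (p₁ ⬝ᵥ rowDivergence w₁ w₂)) :=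
    ((continuous_id.dotProduct continuous_const).tendsto p₁).comp
      (hw₁.tendsto_inv_smul_sum_marginal hconn hq₁simplex hp₁)
  rw [hw₁.sum_edges_eq_dotProduct p₁ fun x y => Real.log (w₁ x y / w₂ x y)]
  refine (zero_add (p₁ ⬝ᵥ rowDivergence w₁ w₂) ▸ hinitial.add hsteps).congr fun n => ?_
  rw [smul_dotProduct, sum_dotProduct, smul_eq_mul, ← mul_add,
    ← sum_pathDivergence_eq hw₁ hw₂ hq₁ hq₂ n, inv_mul_eq_div]
  rfl

/-- divergence rate. Let `w₁, w₂ ∈ W(X,E)`, let `q₁, q₂` be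
strictly positive initial distributions on `X`, and let `p₁` be the stationary
distribution of `w₁`.  With `q_i⁽ⁿ⁾(x₁,…,xₙ) = q_i(x₁) Π_t w_i(x_{t+1}|x_t)`
(here a path with `n+1` points is indexed by `Fin (n+1) → X`) and
`D(q₁⁽ⁿ⁾|q₂⁽ⁿ⁾)` the Kullback–Leibler divergence summed over paths along `E`,
the normalized divergences `(1/n) D(q₁⁽ⁿ⁾|q₂⁽ⁿ⁾)` converge to the divergence rate
`Σ_{(x,y)∈E} p₁(x) w₁(y|x) log(w₁(y|x)/w₂(y|x))`. -/
theorem divergence_rate_limit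
    {X : Type*} [Fintype X] [DecidableEq X] (hX : 2 ≤ Fintype.card X)
    (E : Finset (X × X)) (hconn : StronglyConnected E)
    (w₁ w₂ : X → X → ℝ) (hw₁ : IsMarkovKernel E w₁) (hw₂ : IsMarkovKernel E w₂)
    (q₁ q₂ : X → ℝ) (hq₁ : ∀ x, 0 < q₁ x) (hq₁s : ∑ x, q₁ x = 1)
    (hq₂ : ∀ x, 0 < q₂ x) (hq₂s : ∑ x, q₂ x = 1)
    (p₁ : X → ℝ) (hp₁ : IsStationaryDistrib w₁ p₁) :
    Filter.Tendsto (fun n : ℕ =>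
      (∑ xs : Fin (n + 1) → X,
        if ∀ t : Fin n, (xs t.castSucc, xs t.succ) ∈ E then
          (q₁ (xs 0) * ∏ t : Fin n, w₁ (xs t.castSucc) (xs t.succ)) *
            Real.log ((q₁ (xs 0) * ∏ t : Fin n, w₁ (xs t.castSucc) (xs t.succ)) /
              (q₂ (xs 0) * ∏ t : Fin n, w₂ (xs t.castSucc) (xs t.succ)))
        else 0) / (n + 1 : ℝ))
      Filter.atTop
      (nhds (∑ e ∈ E, p₁ e.1 * w₁ e.1 e.2 * Real.log (w₁ e.1 e.2 / w₂ e.1 e.2))) :=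
  divergence_rate_limit_general E hconn w₁ w₂ hw₁ hw₂ q₁ q₂ hq₁ hq₁s hq₂ p₁ hp₁
end
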